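/- arXiv:0802.1198 — 3 statements merged into one kernel-verified Lean document; each statement's English description precedes it below -/
import Mathlib

section
/- Let E be an arbitrary (countable) graph satisfying Condition (L) and K a field. Then every nonzero two-sided ideal of L_K(E) contains a vertex, i.e. contains the idempotent v for some v ∈ E^0. -/
set_option synthInstance.maxHeartbeats 1000000
set_option maxHeartbeats 1000000

noncomputable section

/-! ## Generators and relations for the Leavitt path algebra of a graph

A (directed) graph is given by types `V` (vertices, `E^0`) and `Ed` (edges, `E^1`),
both countable, together with source and range maps `s r : Ed → V`. -/

/-- Generators for the Leavitt path algebra: vertices, real edges and ghost edges. -/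
inductive LPAGen (V Ed : Type) : Type where
  | vert : V → LPAGen V Ed
  | edge : Ed → LPAGen V Ed
  | ghost : Ed → LPAGen V Ed

open Classical in
/-- The defining relations of the Leavitt path algebra: the vertices are pairwise
orthogonal idempotents, (1) `s(e)e = e = e r(e)`, (2) `r(e)e* = e* = e* s(e)`,
(3) `e* e' = δ_{e,e'} r(e)`, and (4) `v = ∑_{s(e) = v} e e*` for every regular vertex `v`. -/
inductive LPARel (K : Type) [Field K] {V Ed : Type} (s r : Ed → V) :
    FreeAlgebra K (LPAGen V Ed) → FreeAlgebra K (LPAGen V Ed) → Prop where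
  | vert_mul (u v : V) : LPARel K s r
      (FreeAlgebra.ι K (LPAGen.vert u) * FreeAlgebra.ι K (LPAGen.vert v))
      (if u = v then FreeAlgebra.ι K (LPAGen.vert u) else 0)
  | src_mul_edge (e : Ed) : LPARel K s r
      (FreeAlgebra.ι K (LPAGen.vert (s e)) * FreeAlgebra.ι K (LPAGen.edge e))
      (FreeAlgebra.ι K (LPAGen.edge e))
  | edge_mul_rng (e : Ed) : LPARel K s r
      (FreeAlgebra.ι K (LPAGen.edge e) * FreeAlgebra.ι K (LPAGen.vert (r e)))
      (FreeAlgebra.ι K (LPAGen.edge e))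
  | rng_mul_ghost (e : Ed) : LPARel K s r
      (FreeAlgebra.ι K (LPAGen.vert (r e)) * FreeAlgebra.ι K (LPAGen.ghost e))
      (FreeAlgebra.ι K (LPAGen.ghost e))
  | ghost_mul_src (e : Ed) : LPARel K s r
      (FreeAlgebra.ι K (LPAGen.ghost e) * FreeAlgebra.ι K (LPAGen.vert (s e)))
      (FreeAlgebra.ι K (LPAGen.ghost e))
  | ghost_mul_edge (e f : Ed) : LPARel K s r
      (FreeAlgebra.ι K (LPAGen.ghost e) * FreeAlgebra.ι K (LPAGen.edge f))
      (if e = f then FreeAlgebra.ι K (LPAGen.vert (r e)) else 0)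
  | ck2 (v : V) (h : {e : Ed | s e = v}.Finite) (hne : {e : Ed | s e = v}.Nonempty) :
      LPARel K s r
        (∑ e ∈ h.toFinset,
          FreeAlgebra.ι K (LPAGen.edge e) * FreeAlgebra.ι K (LPAGen.ghost e))
        (FreeAlgebra.ι K (LPAGen.vert v))

variable (K : Type) [Field K] {V Ed : Type} (s r : Ed → V)

/-- The ambient unital algebra: quotient of the free associative algebra on the
generators by the ideal induced by the Leavitt path algebra relations. -/
abbrev LPAamb : Type := RingQuot (LPARel K s r)

/-- The canonical image of a generator in the ambient algebra. -/
def lpaGen (g : LPAGen V Ed) : LPAamb K s r :=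
  RingQuot.mkAlgHom K (LPARel K s r) (FreeAlgebra.ι K g)

/-- The Leavitt path algebra `L_K(E)` of the graph `E = (V, Ed, s, r)`: the (in general
non-unital) subalgebra of the ambient quotient algebra generated by the vertices,
edges and ghost edges. -/
def LeavittPathAlgebra : NonUnitalSubalgebra K (LPAamb K s r) :=
  NonUnitalAlgebra.adjoin K (Set.range (lpaGen K s r))

namespace LPA

/-- A vertex, as an element of the Leavitt path algebra. -/
def vertex (v : V) : LeavittPathAlgebra K s r :=
  ⟨lpaGen K s r (LPAGen.vert v), NonUnitalAlgebra.subset_adjoin K ⟨_, rfl⟩⟩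

/-- A (real) edge, as an element of the Leavitt path algebra. -/
def edge (e : Ed) : LeavittPathAlgebra K s r :=
  ⟨lpaGen K s r (LPAGen.edge e), NonUnitalAlgebra.subset_adjoin K ⟨_, rfl⟩⟩

/-- A ghost edge `e*`, as an element of the Leavitt path algebra. -/
def ghost (e : Ed) : LeavittPathAlgebra K s r :=
  ⟨lpaGen K s r (LPAGen.ghost e), NonUnitalAlgebra.subset_adjoin K ⟨_, rfl⟩⟩

/-- The set of elements of the Leavitt path algebra of the form `v`, `e` or `e*`
(i.e. the set `E^0 ∪ E^1 ∪ (E^1)^*`). -/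
def genSet : Set (LeavittPathAlgebra K s r) :=
  {x | ∃ g : LPAGen V Ed, (x : LPAamb K s r) = lpaGen K s r g}

end LPA

/-! ## Graph-theoretic notions -/

section GraphNotions

/-- `Reaches s r u w` : there is a (possibly trivial) path from `u` to `w`,
that is, `w ∈ T(u)`, the tree of `u`. -/
def Reaches (u w : V) : Prop :=
  Relation.ReflTransGen (fun a b => ∃ e : Ed, s e = a ∧ r e = b) u w

/-- A vertex `v` is a bifurcation if it emits at least two distinct edges. -/
def IsBifurcation (v : V) : Prop := ∃ e f : Ed, e ≠ f ∧ s e = v ∧ s f = v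

/-- `v` is a regular vertex: neither a sink nor an infinite emitter. -/
def IsRegularVertex (v : V) : Prop :=
  {e : Ed | s e = v}.Finite ∧ {e : Ed | s e = v}.Nonempty

/-- A nonempty list of edges is a closed path based at `v` if consecutive edges are
composable, its source is `v` and its range is `v`. -/
structure IsClosedPath (es : List Ed) (v : V) : Prop where
  ne : es ≠ []
  chain : es.Chain' fun e f => r e = s f
  src : s (es.head ne) = v
  rng : r (es.getLast ne) = v

/-- A cycle based at `v` : a closed path based at `v` whose edges have pairwise
distinct sources. -/
structure IsCycle (es : List Ed) (v : V) extends IsClosedPath s r es v : Prop where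
  nodup : (es.map s).Nodup

/-- A path (list of edges) has an exit if some edge `g` shares its source with some
edge of the path but is distinct from it. -/
def HasExit (es : List Ed) : Prop := ∃ g : Ed, ∃ e ∈ es, s g = s e ∧ g ≠ e

/-- Condition (L): every cycle has an exit. -/
def ConditionL : Prop := ∀ (es : List Ed) (v : V), IsCycle s r es v → HasExit s es

/-- A line point: no vertex of the tree `T(u)` is a bifurcation or the base of a cycle. -/
def IsLinePoint (u : V) : Prop :=
  ∀ w : V, Reaches s r u w →
    ¬ IsBifurcation s w ∧ ∀ es : List Ed, ¬ IsCycle s r es w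

/-- A set `H` of vertices is hereditary if it is closed under ranges of paths. -/
def IsHereditary (H : Set V) : Prop := ∀ v ∈ H, ∀ w : V, Reaches s r v w → w ∈ H

/-- A set `H` of vertices is saturated if every regular vertex all of whose emitted
edges have range in `H` belongs to `H`. -/
def IsSaturated (H : Set V) : Prop :=
  ∀ v : V, IsRegularVertex s v → (∀ e : Ed, s e = v → r e ∈ H) → v ∈ H

end GraphNotions

/-! ## Ring-theoretic notions for (possibly non-unital) rings -/

section RingNotions

variable {R : Type} [NonUnitalNonAssocRing R]

/-- A left ideal of a (possibly non-unital) ring: an additive subgroup closed under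
left multiplication by arbitrary ring elements. -/
def IsLeftIdeal (I : AddSubgroup R) : Prop := ∀ a : R, ∀ x ∈ I, a * x ∈ I

/-- A two-sided ideal of a (possibly non-unital) ring. -/
def IsTwoSidedIdealSG (I : AddSubgroup R) : Prop :=
  ∀ a : R, ∀ x ∈ I, a * x ∈ I ∧ x * a ∈ I

/-- A minimal left ideal: a nonzero left ideal properly containing no nonzero
left ideal. -/
def IsMinimalLeftIdeal (I : AddSubgroup R) : Prop :=
  IsLeftIdeal I ∧ I ≠ ⊥ ∧ ∀ J : AddSubgroup R, IsLeftIdeal J → J < I → J = ⊥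

/-- The socle of a ring: the sum of all its minimal left ideals (the zero ideal if
there are none). -/
def rsocle (R : Type) [NonUnitalNonAssocRing R] : AddSubgroup R :=
  sSup {I : AddSubgroup R | IsMinimalLeftIdeal I}

/-- The two-sided ideal generated by a subset of a ring. -/
def idealGenBy (S : Set R) : AddSubgroup R :=
  sInf {I : AddSubgroup R | S ⊆ ↑I ∧ IsTwoSidedIdealSG I}

/-- A ring is semiprime if it has no nonzero two-sided ideal with zero square. -/
def IsSemiprimeRing (R : Type) [NonUnitalNonAssocRing R] : Prop :=
  ∀ I : AddSubgroup R, IsTwoSidedIdealSG I → (∀ x ∈ I, ∀ y ∈ I, x * y = 0) → I = ⊥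

/-- An idempotent ring: `R² = R`, i.e. every element is a sum of products. -/
def IsIdempotentRing (R : Type) [NonUnitalNonAssocRing R] : Prop :=
  ∀ x : R, x ∈ AddSubgroup.closure {y : R | ∃ a b : R, y = a * b}

/-- The principal left ideal `R·a = {x * a : x ∈ R}`. -/
def principalLeft (a : R) : AddSubgroup R where
  carrier := Set.range fun x : R => x * a
  add_mem' := by rintro _ _ ⟨x, rfl⟩ ⟨y, rfl⟩; exact ⟨x + y, add_mul x y a⟩
  zero_mem' := ⟨0, zero_mul a⟩
  neg_mem' := by rintro _ ⟨x, rfl⟩; exact ⟨-x, neg_mul x a⟩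

theorem principalLeft.mul_mem {R : Type} [NonUnitalRing R] (a b : R) {x : R}
    (hx : x ∈ principalLeft a) : b * x ∈ principalLeft a := by
  obtain ⟨y, rfl⟩ := hx
  exact ⟨b * y, by simp only []; rw [mul_assoc]⟩

end RingNotions

/-!
Every element of `L_K(E)` is a linear combination of monomials `μ ν*`. Right multiplication of a
nonzero element of the ideal by a vertex and then by a path keeps it nonzero and removes all
ghost edges: at a regular vertex `v` one uses `v = ∑ e e*`, at an infinite emitter an edge that
occurs in none of the monomials, together with the fact that vertices act nontrivially on
boundary paths. What is left is a nonzero combination of paths ending at a vertex `w`; left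
multiplication by `μ₁*` for a shortest such path `μ₁` gives `c • w` plus closed paths at `w`,
with `c ≠ 0`. By Condition (L) every closed path at `w` is left by some path `τ`, and `τ* (·) τ`
removes that closed path while keeping the vertex term. After finitely many steps a nonzero
multiple of a vertex, hence the vertex itself, lies in the ideal.
-/

namespace LPA

open scoped Classical

variable {K s r}

local notation "𝐯" => vertex K s r
local notation "𝐞" => edge K s r
local notation "𝐞⋆" => ghost K s r

theorem vertex_mul_vertex (u v : V) : 𝐯 u * 𝐯 v = if u = v then 𝐯 u else 0 := by
  have h := RingQuot.mkAlgHom_rel K (LPARel.vert_mul (K := K) (s := s) (r := r) u v)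
  rw [map_mul] at h
  split_ifs with huv <;> apply Subtype.ext <;> simp_all [vertex, lpaGen]

theorem vertex_mul_self (v : V) : 𝐯 v * 𝐯 v = 𝐯 v := by
  rw [vertex_mul_vertex, if_pos rfl]

theorem vertex_mul_vertex_of_ne {u v : V} (h : u ≠ v) : 𝐯 u * 𝐯 v = 0 := by
  rw [vertex_mul_vertex, if_neg h]

theorem vertex_source_mul_edge (e : Ed) : 𝐯 (s e) * 𝐞 e = 𝐞 e := by
  have h := RingQuot.mkAlgHom_rel K (LPARel.src_mul_edge (K := K) (s := s) (r := r) e)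
  rw [map_mul] at h
  exact Subtype.ext h

theorem edge_mul_vertex_range (e : Ed) : 𝐞 e * 𝐯 (r e) = 𝐞 e := by
  have h := RingQuot.mkAlgHom_rel K (LPARel.edge_mul_rng (K := K) (s := s) (r := r) e)
  rw [map_mul] at h
  exact Subtype.ext h

theorem vertex_range_mul_ghost (e : Ed) : 𝐯 (r e) * 𝐞⋆ e = 𝐞⋆ e := by
  have h := RingQuot.mkAlgHom_rel K (LPARel.rng_mul_ghost (K := K) (s := s) (r := r) e)
  rw [map_mul] at h
  exact Subtype.ext h

theorem ghost_mul_vertex_source (e : Ed) : 𝐞⋆ e * 𝐯 (s e) = 𝐞⋆ e := by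
  have h := RingQuot.mkAlgHom_rel K (LPARel.ghost_mul_src (K := K) (s := s) (r := r) e)
  rw [map_mul] at h
  exact Subtype.ext h

theorem ghost_mul_edge (e f : Ed) : 𝐞⋆ e * 𝐞 f = if e = f then 𝐯 (r e) else 0 := by
  have h := RingQuot.mkAlgHom_rel K (LPARel.ghost_mul_edge (K := K) (s := s) (r := r) e f)
  rw [map_mul] at h
  split_ifs with hef <;> apply Subtype.ext <;> simp_all [vertex, lpaGen, edge, ghost]

theorem ghost_mul_edge_self (e : Ed) : 𝐞⋆ e * 𝐞 e = 𝐯 (r e) := by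
  rw [ghost_mul_edge, if_pos rfl]

theorem ghost_mul_edge_of_ne {e f : Ed} (h : e ≠ f) : 𝐞⋆ e * 𝐞 f = 0 := by
  rw [ghost_mul_edge, if_neg h]

theorem sum_edge_mul_ghost {v : V} (hv : IsRegularVertex s v) :
    ∑ e ∈ hv.1.toFinset, 𝐞 e * 𝐞⋆ e = 𝐯 v := by
  have h := RingQuot.mkAlgHom_rel K (LPARel.ck2 (K := K) (s := s) (r := r) v hv.1 hv.2)
  simp only [map_sum, map_mul] at h
  exact Subtype.ext (by simpa [vertex, edge, ghost, lpaGen] using h)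

/-! ### Paths -/

theorem not_prefix_append_singleton {α : Type*} {a : α} {l₁ l₂ : List α} (h₂ : a ∉ l₂)
    (hne : l₁ ≠ l₂) : ¬l₁ ++ [a] <+: l₂ ++ [a] := by
  intro h
  rcases lt_or_ge l₁.length l₂.length with hlt | hge
  · have := List.prefix_of_prefix_length_le h (List.prefix_append l₂ [a]) (by simpa using hlt)
    exact h₂ (this.subset (by simp))
  · have hlen : (l₁ ++ [a]).length = (l₂ ++ [a]).length := by
      have := h.length_le
      simp only [List.length_append, List.length_singleton] at this ⊢
      omega
    exact hne (List.append_cancel_right (h.eq_of_length hlen))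

inductive IsPath (s r : Ed → V) : V → List Ed → V → Prop
  | nil (v : V) : IsPath s r v [] v
  | cons {e : Ed} {l : List Ed} {w : V} : IsPath s r (r e) l w → IsPath s r (s e) (e :: l) w

namespace IsPath

theorem nil_iff {u w : V} : IsPath s r u [] w ↔ u = w :=
  ⟨fun h => by cases h; rfl, fun h => h ▸ nil u⟩

theorem cons_iff {u w : V} {e : Ed} {l : List Ed} :
    IsPath s r u (e :: l) w ↔ u = s e ∧ IsPath s r (r e) l w :=
  ⟨fun h => by cases h with | cons h => exact ⟨rfl, h⟩, fun ⟨hu, h⟩ => hu ▸ cons h⟩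

theorem single (e : Ed) : IsPath s r (s e) [e] (r e) := cons (nil _)

theorem append {u m w : V} {l₁ l₂ : List Ed} (h₁ : IsPath s r u l₁ m) (h₂ : IsPath s r m l₂ w) :
    IsPath s r u (l₁ ++ l₂) w := by
  induction h₁ with
  | nil => exact h₂
  | cons _ ih => exact cons (ih h₂)

theorem of_append {u w : V} {l₁ l₂ : List Ed} (h : IsPath s r u (l₁ ++ l₂) w) :
    ∃ m, IsPath s r u l₁ m ∧ IsPath s r m l₂ w := by
  induction l₁ generalizing u with
  | nil => exact ⟨u, nil u, h⟩
  | cons e l ih =>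
    obtain ⟨rfl, h'⟩ := cons_iff.1 h
    obtain ⟨m, h₁, h₂⟩ := ih h'
    exact ⟨m, cons h₁, h₂⟩

theorem target_unique {u w w' : V} {l : List Ed} (h : IsPath s r u l w)
    (h' : IsPath s r u l w') : w = w' := by
  induction h with
  | nil => exact nil_iff.1 h'
  | cons _ ih => exact ih (cons_iff.1 h').2

theorem right_of_append {u m w : V} {l₁ l₂ : List Ed} (h : IsPath s r u (l₁ ++ l₂) w)
    (h₁ : IsPath s r u l₁ m) : IsPath s r m l₂ w := by
  obtain ⟨m', h₁', h₂⟩ := h.of_append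
  rwa [h₁.target_unique h₁']

end IsPath

variable (K s r) in
/-- The path `μ` as an element of `L_K(E)`. It is anchored at its range `w`, so that the
trivial path is the vertex `w`: `L_K(E)` need not have a unit. -/
def path : List Ed → V → LeavittPathAlgebra K s r
  | [], w => 𝐯 w
  | e :: l, w => 𝐞 e * path l w

variable (K s r) in
/-- The ghost path `ν*` of a path `ν` ending at `z`. -/
def pathStar (z : V) : List Ed → LeavittPathAlgebra K s r
  | [] => 𝐯 z
  | e :: l => pathStar z l * 𝐞⋆ e

local notation "𝐩" => path K s r
local notation "𝐩⋆" => pathStar K s r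

@[simp]
theorem path_nil (w : V) : 𝐩 [] w = 𝐯 w := rfl

theorem path_cons (e : Ed) (l : List Ed) (w : V) : 𝐩 (e :: l) w = 𝐞 e * 𝐩 l w := rfl

@[simp]
theorem pathStar_nil (z : V) : 𝐩⋆ z [] = 𝐯 z := rfl

theorem pathStar_cons (z : V) (e : Ed) (l : List Ed) :
    𝐩⋆ z (e :: l) = 𝐩⋆ z l * 𝐞⋆ e := rfl

theorem path_mul_vertex (μ : List Ed) (w : V) : 𝐩 μ w * 𝐯 w = 𝐩 μ w := by
  induction μ with
  | nil => exact vertex_mul_self w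
  | cons e l ih => rw [path_cons, mul_assoc, ih]

theorem vertex_mul_path {u w : V} {μ : List Ed} (h : IsPath s r u μ w) :
    𝐯 u * 𝐩 μ w = 𝐩 μ w := by
  cases h with
  | nil => exact vertex_mul_self _
  | cons _ => rw [path_cons, ← mul_assoc, vertex_source_mul_edge]

theorem pathStar_mul_vertex {u z : V} {ν : List Ed} (h : IsPath s r u ν z) :
    𝐩⋆ z ν * 𝐯 u = 𝐩⋆ z ν := by
  cases h with
  | nil => exact vertex_mul_self _
  | cons _ => rw [pathStar_cons, mul_assoc, ghost_mul_vertex_source]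

theorem pathStar_mul_vertex_of_ne {u u' z : V} {ν : List Ed} (h : IsPath s r u ν z)
    (hu : u ≠ u') : 𝐩⋆ z ν * 𝐯 u' = 0 := by
  rw [← pathStar_mul_vertex h, mul_assoc, vertex_mul_vertex_of_ne hu, mul_zero]

theorem path_mul_path {m w : V} (μ : List Ed) {δ : List Ed} (hδ : IsPath s r m δ w) :
    𝐩 μ m * 𝐩 δ w = 𝐩 (μ ++ δ) w := by
  induction μ with
  | nil => exact vertex_mul_path hδ
  | cons e l ih => rw [path_cons, mul_assoc, ih]; rfl

theorem pathStar_mul_pathStar {z z' : V} {δ : List Ed} (hδ : IsPath s r z' δ z) (ν : List Ed) :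
    𝐩⋆ z δ * 𝐩⋆ z' ν = 𝐩⋆ z (ν ++ δ) := by
  induction ν with
  | nil => exact pathStar_mul_vertex hδ
  | cons e l ih => rw [pathStar_cons, ← mul_assoc, ih]; rfl

theorem pathStar_mul_path_append {u z w : V} {ν δ : List Ed} (hν : IsPath s r u ν z)
    (hδ : IsPath s r z δ w) : 𝐩⋆ z ν * 𝐩 (ν ++ δ) w = 𝐩 δ w := by
  induction hν with
  | nil => exact vertex_mul_path hδ
  | @cons e l z hl ih =>
    rw [pathStar_cons, List.cons_append, path_cons, mul_assoc, ← mul_assoc (𝐞⋆ e),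
      ghost_mul_edge_self, vertex_mul_path (hl.append hδ), ih hδ]

theorem pathStar_append_mul_path {u w z : V} {ρ δ : List Ed} (hρ : IsPath s r u ρ w)
    (hδ : IsPath s r w δ z) : 𝐩⋆ z (ρ ++ δ) * 𝐩 ρ w = 𝐩⋆ z δ := by
  induction hρ with
  | nil => exact pathStar_mul_vertex hδ
  | @cons e l w hl ih =>
    rw [List.cons_append, pathStar_cons, path_cons, mul_assoc, ← mul_assoc (𝐞⋆ e),
      ghost_mul_edge_self, vertex_mul_path hl, ih hδ]

theorem pathStar_mul_path_self {u w : V} {μ : List Ed} (h : IsPath s r u μ w) :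
    𝐩⋆ w μ * 𝐩 μ w = 𝐯 w := by
  simpa using pathStar_mul_path_append h (IsPath.nil w)

theorem pathStar_mul_path_eq_zero {u w : V} (z : V) {ν ρ : List Ed} (hρ : IsPath s r u ρ w)
    (h₁ : ¬ν <+: ρ) (h₂ : ¬ρ <+: ν) : 𝐩⋆ z ν * 𝐩 ρ w = 0 := by
  induction hρ generalizing ν with
  | nil => exact absurd List.nil_prefix h₂
  | @cons f l w hl ih =>
    rcases ν with _ | ⟨e, ν⟩
    · exact absurd List.nil_prefix h₁
    rw [pathStar_cons, path_cons, mul_assoc, ← mul_assoc (𝐞⋆ e), ghost_mul_edge]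
    split_ifs with hef
    · subst hef
      rw [vertex_mul_path hl]
      exact ih (fun h => h₁ (List.cons_prefix_cons.2 ⟨rfl, h⟩))
        (fun h => h₂ (List.cons_prefix_cons.2 ⟨rfl, h⟩))
    · rw [zero_mul, mul_zero]

theorem pathStar_mul_path_of_ne {u u' z w : V} {ν ρ : List Ed} (hν : IsPath s r u ν z)
    (hρ : IsPath s r u' ρ w) (h : u ≠ u') : 𝐩⋆ z ν * 𝐩 ρ w = 0 := by
  rw [← pathStar_mul_vertex hν, ← vertex_mul_path hρ, mul_assoc, ← mul_assoc (𝐯 u),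
    vertex_mul_vertex_of_ne h, zero_mul, mul_zero]

theorem pathStar_mul_path_mul_path {w w' : V} {δ τ : List Ed} (hδ : IsPath s r w δ w)
    (hτ : IsPath s r w τ w') : 𝐩⋆ w' τ * 𝐩 δ w * 𝐩 τ w' =
      if τ <+: δ ++ τ then 𝐩 ((δ ++ τ).drop τ.length) w' else 0 := by
  rw [mul_assoc, path_mul_path δ hτ]
  split_ifs with h
  · obtain ⟨δ', hδ'⟩ := h
    rw [← hδ', List.drop_left]
    exact pathStar_mul_path_append hτ ((hδ' ▸ hδ.append hτ).right_of_append hτ)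
  · refine pathStar_mul_path_eq_zero w' (hδ.append hτ) h fun h' => h ?_
    obtain rfl : δ = [] := by simpa using h'.length_le
    exact List.prefix_refl τ

theorem pathStar_mul_vertex_mul_path {w w' : V} {τ : List Ed} (hτ : IsPath s r w τ w') :
    𝐩⋆ w' τ * 𝐯 w * 𝐩 τ w' = 𝐯 w' := by
  simpa using pathStar_mul_path_mul_path (IsPath.nil w) hτ

theorem pathStar_mul_path_of_length_le {u₁ u w : V} {μ₁ μ : List Ed} (h₁ : IsPath s r u₁ μ₁ w)
    (h : IsPath s r u μ w) (hlen : μ₁.length ≤ μ.length) (hne : μ ≠ μ₁) :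
    𝐩⋆ w μ₁ * 𝐩 μ w =
      if μ₁ <+: μ ∧ IsPath s r u₁ μ w then 𝐩 (μ.drop μ₁.length) w else 0 := by
  split_ifs with hc
  · obtain ⟨⟨δ, rfl⟩, hμ⟩ := hc
    rw [List.drop_left]
    exact pathStar_mul_path_append h₁ (hμ.right_of_append h₁)
  · by_cases hu : u₁ = u
    · subst hu
      exact pathStar_mul_path_eq_zero w h (fun hp => hc ⟨hp, h⟩)
        (fun hp => hne (hp.eq_of_length (le_antisymm hp.length_le hlen)))
    · exact pathStar_mul_path_of_ne h₁ h hu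

/-! ### Vertices act nontrivially on boundary paths -/

/-- A boundary path of `E`: an infinite path, or a finite path ending at a vertex that is not
regular. `x.seq n` is its `n`-th edge, or its terminal vertex once the path has ended. -/
@[ext]
structure BoundaryPath (s r : Ed → V) : Type where
  seq : ℕ → V ⊕ Ed
  source_succ : ∀ n e, seq n = .inr e → (seq (n + 1)).elim id s = r e
  inl_succ : ∀ n v, seq n = .inl v → seq (n + 1) = .inl v
  not_isRegularVertex : ∀ n v, seq n = .inl v → ¬IsRegularVertex s v

namespace BoundaryPath

def source (x : BoundaryPath s r) : V := (x.seq 0).elim id s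

def cons (e : Ed) (x : BoundaryPath s r) (h : x.source = r e) : BoundaryPath s r where
  seq
    | 0 => .inr e
    | n + 1 => x.seq n
  source_succ
    | 0, _, rfl => h
    | n + 1, e', he => x.source_succ n e' he
  inl_succ
    | 0, _, h0 => nomatch h0
    | n + 1, v, hv => x.inl_succ n v hv
  not_isRegularVertex
    | 0, _, h0 => nomatch h0
    | n + 1, v, hv => x.not_isRegularVertex n v hv

def tail (x : BoundaryPath s r) : BoundaryPath s r where
  seq n := x.seq (n + 1)
  source_succ n := x.source_succ (n + 1)
  inl_succ n := x.inl_succ (n + 1)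
  not_isRegularVertex n := x.not_isRegularVertex (n + 1)

@[simp]
theorem source_cons (e : Ed) (x : BoundaryPath s r) (h : x.source = r e) :
    (x.cons e h).source = s e := rfl

@[simp]
theorem cons_seq_zero (e : Ed) (x : BoundaryPath s r) (h : x.source = r e) :
    (x.cons e h).seq 0 = .inr e := rfl

@[simp]
theorem tail_cons (e : Ed) (x : BoundaryPath s r) (h : x.source = r e) :
    (x.cons e h).tail = x := rfl

theorem source_eq_of_seq_zero {x : BoundaryPath s r} {e : Ed} (h : x.seq 0 = .inr e) :
    x.source = s e := by
  simp [source, h]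

theorem source_tail {x : BoundaryPath s r} {e : Ed} (h : x.seq 0 = .inr e) :
    x.tail.source = r e :=
  x.source_succ 0 e h

theorem cons_tail {x : BoundaryPath s r} {e : Ed} (h : x.seq 0 = .inr e) :
    x.tail.cons e (source_tail h) = x := by
  refine BoundaryPath.ext (funext fun n => ?_)
  cases n
  exacts [h.symm, rfl]

variable (s) in
def greedyStep (v : V) : V ⊕ Ed :=
  if h : IsRegularVertex s v then .inr h.2.some else .inl v

theorem elim_greedyStep (v : V) : (greedyStep s v).elim id s = v := by
  unfold greedyStep
  split_ifs with h
  exacts [h.2.some_mem, rfl]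

theorem exists_source_eq (v : V) : ∃ x : BoundaryPath s r, x.source = v := by
  let next (w : V) : V := (greedyStep s w).elim id r
  have step_inl {w u : V} (h : greedyStep s w = .inl u) : u = w ∧ ¬IsRegularVertex s w := by
    unfold greedyStep at h
    split_ifs at h with hw
    exact ⟨(Sum.inl.inj h).symm, hw⟩
  refine ⟨⟨fun n => greedyStep s (next^[n] v), fun n e he => ?_, fun n u hu => ?_,
    fun n u hu => ?_⟩, elim_greedyStep v⟩
  · rw [Function.iterate_succ_apply', elim_greedyStep]
    simp only [next, he, Sum.elim_inr]
  · obtain ⟨rfl, -⟩ := step_inl hu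
    rw [Function.iterate_succ_apply']
    simp only [next, hu, Sum.elim_inl, id]
  · obtain ⟨rfl, h⟩ := step_inl hu
    exact h

variable (K) in
def ofPartial (p : BoundaryPath s r → Option (BoundaryPath s r)) :
    Module.End K (BoundaryPath s r →₀ K) :=
  Finsupp.lift _ K _ fun x => (p x).elim 0 (Finsupp.single · 1)

theorem ofPartial_single (p : BoundaryPath s r → Option (BoundaryPath s r))
    (x : BoundaryPath s r) (a : K) :
    ofPartial K p (Finsupp.single x a) = (p x).elim 0 (Finsupp.single · a) := by
  cases h : p x <;> simp [ofPartial, h]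

theorem ofPartial_mul (p q : BoundaryPath s r → Option (BoundaryPath s r)) :
    ofPartial K p * ofPartial K q = ofPartial K fun x => (q x).bind p := by
  refine Finsupp.lhom_ext fun x a => ?_
  rw [Module.End.mul_apply, ofPartial_single, ofPartial_single]
  cases q x <;> simp [ofPartial_single]

theorem ofPartial_none : ofPartial K (fun _ : BoundaryPath s r => none) = 0 :=
  Finsupp.lhom_ext fun x a => by simp [ofPartial_single]

theorem ite_ofPartial (P : Prop) [Decidable P]
    (p : BoundaryPath s r → Option (BoundaryPath s r)) :
    (if P then ofPartial K p else 0) = ofPartial K fun x => if P then p x else none := by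
  split_ifs
  exacts [rfl, ofPartial_none.symm]

variable (s r) in
def genAction : LPAGen V Ed → BoundaryPath s r → Option (BoundaryPath s r)
  | .vert v, x => if x.source = v then some x else none
  | .edge e, x => if h : x.source = r e then some (x.cons e h) else none
  | .ghost e, x => if x.seq 0 = .inr e then some x.tail else none

variable (K s r) in
def freeRep : FreeAlgebra K (LPAGen V Ed) →ₐ[K] Module.End K (BoundaryPath s r →₀ K) :=
  FreeAlgebra.lift K fun g => ofPartial K (genAction s r g)

theorem freeRep_ι (g : LPAGen V Ed) :
    freeRep K s r (FreeAlgebra.ι K g) = ofPartial K (genAction s r g) :=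
  FreeAlgebra.lift_ι_apply _ _

theorem freeRep_sum_edge_mul_ghost {v : V} (hv : IsRegularVertex s v) :
    ∑ e ∈ hv.1.toFinset, freeRep K s r (FreeAlgebra.ι K (.edge e) * FreeAlgebra.ι K (.ghost e)) =
      freeRep K s r (FreeAlgebra.ι K (.vert v)) := by
  refine Finsupp.lhom_ext fun x a => ?_
  simp only [map_mul, freeRep_ι, ofPartial_mul, LinearMap.sum_apply,
    ofPartial_single]
  rcases hx : x.seq 0 with w | f
  · have hw : x.source = w := by simp [source, hx]
    have hwv : w ≠ v := fun h => x.not_isRegularVertex 0 w hx (h ▸ hv)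
    simp [genAction, hx, hw, hwv]
  · have hxf := source_eq_of_seq_zero hx
    have hterm (e : Ed) : ((if f = e then some x.tail else none).bind
        (genAction s r (.edge e))).elim 0 (Finsupp.single · a) =
          if f = e then Finsupp.single x a else 0 := by
      split_ifs with h
      · subst h
        simp [genAction, source_tail hx, cons_tail hx]
      · rfl
    simp only [genAction, hx, Sum.inr.injEq, hxf, hterm, Finset.sum_ite_eq,
      Set.Finite.mem_toFinset]
    split_ifs <;> simp_all

theorem freeRep_rel {a b : FreeAlgebra K (LPAGen V Ed)} (h : LPARel K s r a b) :
    freeRep K s r a = freeRep K s r b := by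
  induction h with
  | ck2 v hfin hne => simpa [map_sum] using freeRep_sum_edge_mul_ghost (K := K) ⟨hfin, hne⟩
  | _ =>
    simp only [map_mul, freeRep_ι, ofPartial_mul, apply_ite (freeRep K s r), map_zero,
      ite_ofPartial]
    congr 1
    funext x
    simp only [genAction]
    split_ifs <;> simp_all [genAction, source_eq_of_seq_zero, source_tail, Ne.symm]

variable (K s r) in
def rep : LPAamb K s r →ₐ[K] Module.End K (BoundaryPath s r →₀ K) :=
  RingQuot.liftAlgHom K ⟨freeRep K s r, fun _ _ h => freeRep_rel h⟩

theorem rep_vertex_single {x : BoundaryPath s r} :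
    rep K s r (𝐯 x.source) (Finsupp.single x 1) = Finsupp.single x 1 := by
  simp [vertex, lpaGen, rep, freeRep_ι, ofPartial_single, genAction]

end BoundaryPath

theorem vertex_ne_zero (v : V) : 𝐯 v ≠ 0 := by
  obtain ⟨x, rfl⟩ := BoundaryPath.exists_source_eq (s := s) (r := r) v
  intro h
  have := BoundaryPath.rep_vertex_single (K := K) (x := x)
  rw [h, ZeroMemClass.coe_zero, map_zero, LinearMap.zero_apply] at this
  exact Finsupp.single_ne_zero.2 one_ne_zero this.symm

/-! ### Monomials -/

variable (K s r) in
/-- The monomial `μ ν*` coded by `t = (μ, z, ν)`, where `z` is the common range of `μ` and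
`ν`. -/
def monomial (t : List Ed × V × List Ed) : LeavittPathAlgebra K s r :=
  𝐩 t.1 t.2.1 * 𝐩⋆ t.2.1 t.2.2

variable (s r) in
def IsMonomialAt (w : V) (t : List Ed × V × List Ed) : Prop :=
  (∃ u, IsPath s r u t.1 t.2.1) ∧ IsPath s r w t.2.2 t.2.1

variable (K s r) in
def monomialSpan (d : ℕ) (w : V) : Submodule K (LeavittPathAlgebra K s r) :=
  Submodule.span K (monomial K s r '' {t | IsMonomialAt s r w t ∧ t.2.2.length ≤ d})

variable (K s r) in
def monomials : Set (LeavittPathAlgebra K s r) :=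
  monomial K s r '' {t | ∃ w, IsMonomialAt s r w t}

theorem monomial_nil (μ : List Ed) (z : V) : monomial K s r (μ, z, []) = 𝐩 μ z :=
  path_mul_vertex μ z

theorem monomial_mul_vertex {w : V} {t : List Ed × V × List Ed} (ht : IsMonomialAt s r w t) :
    monomial K s r t * 𝐯 w = monomial K s r t := by
  rw [monomial, mul_assoc, pathStar_mul_vertex ht.2]

theorem monomial_mul_vertex_of_ne {w w' : V} {t : List Ed × V × List Ed}
    (ht : IsMonomialAt s r w t) (h : w ≠ w') : monomial K s r t * 𝐯 w' = 0 := by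
  rw [monomial, mul_assoc, pathStar_mul_vertex_of_ne ht.2 h, mul_zero]

theorem monomial_mul_sum_vertex {w : V} {t : List Ed × V × List Ed} (ht : IsMonomialAt s r w t)
    {W : Finset V} (hw : w ∈ W) : monomial K s r t * ∑ v ∈ W, 𝐯 v = monomial K s r t := by
  rw [Finset.mul_sum, Finset.sum_eq_single w (fun v _ hv => monomial_mul_vertex_of_ne ht hv.symm)
    (absurd hw), monomial_mul_vertex ht]

theorem path_mul_edge (μ : List Ed) (f : Ed) : 𝐩 μ (s f) * 𝐞 f = 𝐩 (μ ++ [f]) (r f) := by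
  rw [← path_mul_path μ (IsPath.single f), path_cons, path_nil, edge_mul_vertex_range]

theorem monomial_nil_mul_edge (μ : List Ed) (f : Ed) :
    monomial K s r (μ, s f, []) * 𝐞 f = monomial K s r (μ ++ [f], r f, []) := by
  rw [monomial_nil, monomial_nil, path_mul_edge]

theorem monomial_cons_mul_edge {z : V} {μ ν : List Ed} {f : Ed} (hν : IsPath s r (r f) ν z) :
    monomial K s r (μ, z, f :: ν) * 𝐞 f = monomial K s r (μ, z, ν) := by
  simp only [monomial, pathStar_cons, mul_assoc, ghost_mul_edge_self, pathStar_mul_vertex hν]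

theorem monomial_cons_mul_edge_of_ne {z : V} {μ ν : List Ed} {e f : Ed} (h : e ≠ f) :
    monomial K s r (μ, z, e :: ν) * 𝐞 f = 0 := by
  simp only [monomial, pathStar_cons, mul_assoc, ghost_mul_edge_of_ne h, mul_zero]

theorem monomial_mul_ghost (z : V) (μ ν : List Ed) (e : Ed) :
    monomial K s r (μ, z, ν) * 𝐞⋆ e = monomial K s r (μ, z, e :: ν) := by
  simp only [monomial, pathStar_cons, mul_assoc]

theorem monomial_mul_monomial_mem {w w' : V} {t t' : List Ed × V × List Ed}
    (ht : IsMonomialAt s r w t) (ht' : IsMonomialAt s r w' t') :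
    monomial K s r t * monomial K s r t' ∈ Submodule.span K (monomials K s r) := by
  obtain ⟨μ, z, ν⟩ := t
  obtain ⟨μ', z', ν'⟩ := t'
  obtain ⟨⟨u, hμ⟩, hν⟩ := ht
  obtain ⟨⟨u', hμ'⟩, hν'⟩ := ht'
  have hsplit : monomial K s r (μ, z, ν) * monomial K s r (μ', z', ν') =
      𝐩 μ z * (𝐩⋆ z ν * 𝐩 μ' z') * 𝐩⋆ z' ν' := by
    simp only [monomial, mul_assoc]
  rw [hsplit]
  by_cases hwu : w = u'
  swap
  · rw [pathStar_mul_path_of_ne hν hμ' hwu, mul_zero, zero_mul]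
    exact zero_mem _
  subst hwu
  by_cases h₁ : ν <+: μ'
  · obtain ⟨δ, rfl⟩ := h₁
    have hδ := hμ'.right_of_append hν
    rw [pathStar_mul_path_append hν hδ, path_mul_path μ hδ]
    exact Submodule.subset_span ⟨(μ ++ δ, z', ν'), ⟨w', ⟨u, hμ.append hδ⟩, hν'⟩, rfl⟩
  by_cases h₂ : μ' <+: ν
  · obtain ⟨δ, rfl⟩ := h₂
    have hδ := hν.right_of_append hμ'
    rw [pathStar_append_mul_path hμ' hδ, mul_assoc, pathStar_mul_pathStar hδ]
    exact Submodule.subset_span ⟨(μ, z, ν' ++ δ), ⟨w', ⟨u, hμ⟩, hν'.append hδ⟩, rfl⟩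
  · rw [pathStar_mul_path_eq_zero z hμ' h₁ h₂, mul_zero, zero_mul]
    exact zero_mem _

theorem mul_mem_span_monomials {x y : LeavittPathAlgebra K s r}
    (hx : x ∈ Submodule.span K (monomials K s r))
    (hy : y ∈ Submodule.span K (monomials K s r)) :
    x * y ∈ Submodule.span K (monomials K s r) := by
  induction hx, hy using Submodule.span_induction₂ with
  | mem_mem x y hx hy =>
    obtain ⟨t, ⟨w, ht⟩, rfl⟩ := hx
    obtain ⟨t', ⟨w', ht'⟩, rfl⟩ := hy
    exact monomial_mul_monomial_mem ht ht'
  | zero_left => rw [zero_mul]; exact zero_mem _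
  | zero_right => rw [mul_zero]; exact zero_mem _
  | add_left _ _ _ _ _ _ h₁ h₂ => rw [add_mul]; exact add_mem h₁ h₂
  | add_right _ _ _ _ _ _ h₁ h₂ => rw [mul_add]; exact add_mem h₁ h₂
  | smul_left a _ _ _ _ h => rw [smul_mul_assoc]; exact Submodule.smul_mem _ a h
  | smul_right a _ _ _ _ h => rw [mul_smul_comm]; exact Submodule.smul_mem _ a h

theorem mem_span_monomials (x : LeavittPathAlgebra K s r) :
    x ∈ Submodule.span K (monomials K s r) := by
  obtain ⟨x, hx⟩ := x
  induction hx using NonUnitalAlgebra.adjoin_induction with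
  | mem x hx =>
    obtain ⟨g, rfl⟩ := hx
    refine Submodule.subset_span ?_
    cases g with
    | vert v => exact ⟨([], v, []), ⟨v, ⟨v, .nil v⟩, .nil v⟩, monomial_nil [] v⟩
    | edge e =>
      exact ⟨([e], r e, []), ⟨r e, ⟨s e, .single e⟩, .nil _⟩,
        (monomial_nil [e] (r e)).trans (edge_mul_vertex_range e)⟩
    | ghost e =>
      refine ⟨([], r e, [e]), ⟨s e, ⟨r e, .nil _⟩, .single e⟩, ?_⟩
      simp only [monomial, path_nil, pathStar_cons, pathStar_nil, ← mul_assoc, vertex_mul_self]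
      exact vertex_range_mul_ghost e
  | add x y _ _ hx hy => exact add_mem hx hy
  | zero => exact zero_mem _
  | mul x y _ _ hx hy => exact mul_mem_span_monomials hx hy
  | smul a x _ hx => exact Submodule.smul_mem _ a hx

theorem exists_mul_sum_vertex_eq_self (x : LeavittPathAlgebra K s r) :
    ∃ W : Finset V, x * ∑ w ∈ W, 𝐯 w = x := by
  obtain ⟨c, hc, rfl⟩ :=
    (Finsupp.mem_span_image_iff_linearCombination K).1 (mem_span_monomials x)
  choose src hsrc using fun t (ht : t ∈ c.support) => hc ht
  refine ⟨c.support.attach.image fun t => src t.1 t.2, ?_⟩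
  rw [Finsupp.linearCombination_apply, Finsupp.sum, Finset.sum_mul]
  refine Finset.sum_congr rfl fun t ht => ?_
  rw [smul_mul_assoc, monomial_mul_sum_vertex (hsrc t ht)
    (Finset.mem_image_of_mem _ (Finset.mem_attach _ ⟨t, ht⟩))]

theorem exists_forall_mul_vertex_mem_monomialSpan (x : LeavittPathAlgebra K s r) :
    ∃ d, ∀ w, x * 𝐯 w ∈ monomialSpan K s r d w := by
  obtain ⟨c, hc, rfl⟩ :=
    (Finsupp.mem_span_image_iff_linearCombination K).1 (mem_span_monomials x)
  refine ⟨c.support.sup fun t => t.2.2.length, fun w => ?_⟩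
  rw [Finsupp.linearCombination_apply, Finsupp.sum, Finset.sum_mul]
  refine Submodule.sum_mem _ fun t ht => ?_
  obtain ⟨w', ht'⟩ := hc ht
  rw [smul_mul_assoc]
  refine Submodule.smul_mem _ _ ?_
  by_cases h : w' = w
  · subst h
    rw [monomial_mul_vertex ht']
    exact Submodule.subset_span ⟨t, ⟨ht', Finset.le_sup (f := fun t => t.2.2.length) ht⟩, rfl⟩
  · rw [monomial_mul_vertex_of_ne ht' h]
    exact zero_mem _

theorem exists_mul_vertex_ne_zero_mem_monomialSpan {x : LeavittPathAlgebra K s r} (hx : x ≠ 0) :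
    ∃ d w, x * 𝐯 w ≠ 0 ∧ x * 𝐯 w ∈ monomialSpan K s r d w := by
  obtain ⟨W, hW⟩ := exists_mul_sum_vertex_eq_self x
  obtain ⟨d, hd⟩ := exists_forall_mul_vertex_mem_monomialSpan x
  obtain ⟨w, -, hw⟩ : ∃ w ∈ W, x * 𝐯 w ≠ 0 := by
    by_contra! h
    rw [← hW, Finset.mul_sum, Finset.sum_eq_zero h] at hx
    exact hx rfl
  exact ⟨d, w, hw, hd w⟩

/-! ### Ghost elimination -/

theorem mul_eq_self_of_mem_span {R A : Type*} [Semiring R] [NonUnitalNonAssocSemiring A]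
    [Module R A] [IsScalarTower R A A] {S : Set A} {g y : A} (h : ∀ x ∈ S, x * g = x)
    (hy : y ∈ Submodule.span R S) : y * g = y :=
  (Submodule.span_le (p := LinearMap.eqLocus (LinearMap.mulRight R g) LinearMap.id)).2 h hy

theorem mul_mem_of_mem_span {R A : Type*} [Semiring R] [NonUnitalNonAssocSemiring A]
    [Module R A] [IsScalarTower R A A] {S : Set A} {N : Submodule R A} {g y : A}
    (h : ∀ x ∈ S, x * g ∈ N) (hy : y ∈ Submodule.span R S) : y * g ∈ N :=
  (Submodule.span_le (p := N.comap (LinearMap.mulRight R g))).2 h hy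

theorem mul_vertex_of_mem_monomialSpan {d : ℕ} {u : V} {y : LeavittPathAlgebra K s r}
    (hy : y ∈ monomialSpan K s r d u) : y * 𝐯 u = y :=
  mul_eq_self_of_mem_span (by rintro _ ⟨t, ⟨ht, -⟩, rfl⟩; exact monomial_mul_vertex ht) hy

theorem mul_edge_mem_monomialSpan {d : ℕ} {u : V} {f : Ed} (hf : s f = u)
    {y : LeavittPathAlgebra K s r} (hy : y ∈ monomialSpan K s r (d + 1) u) :
    y * 𝐞 f ∈ monomialSpan K s r d (r f) := by
  refine mul_mem_of_mem_span ?_ hy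
  rintro _ ⟨⟨μ, z, _ | ⟨e, ν⟩⟩, ⟨⟨⟨u', hμ⟩, hν⟩, hd⟩, rfl⟩
  · obtain rfl := IsPath.nil_iff.1 hν
    subst hf
    rw [monomial_nil_mul_edge]
    exact Submodule.subset_span ⟨_, ⟨⟨⟨u', hμ.append (.single f)⟩, .nil _⟩, Nat.zero_le _⟩, rfl⟩
  · obtain ⟨rfl, hν'⟩ := IsPath.cons_iff.1 hν
    by_cases hef : e = f
    · subst hef
      rw [monomial_cons_mul_edge hν']
      exact Submodule.subset_span ⟨(μ, z, ν), ⟨⟨⟨u', hμ⟩, hν'⟩, by simpa using hd⟩, rfl⟩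
    · rw [monomial_cons_mul_edge_of_ne hef]
      exact zero_mem _

theorem monomialSpan_le_zero_of_forall_ne {u : V} (hu : ∀ e, s e ≠ u) (d : ℕ) :
    monomialSpan K s r d u ≤ monomialSpan K s r 0 u := by
  refine Submodule.span_mono (Set.image_mono ?_)
  rintro ⟨μ, z, _ | ⟨e, ν⟩⟩ ⟨ht, -⟩
  · exact ⟨ht, le_rfl⟩
  · exact absurd (IsPath.cons_iff.1 ht.2).1.symm (hu e)

theorem eq_zero_of_mul_edge_eq_zero_of_isRegularVertex {u : V} (hu : IsRegularVertex s u)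
    {y : LeavittPathAlgebra K s r} (hy : y * 𝐯 u = y) (h : ∀ f, s f = u → y * 𝐞 f = 0) :
    y = 0 := by
  rw [← hy, ← sum_edge_mul_ghost hu, Finset.mul_sum]
  exact Finset.sum_eq_zero fun f hf => by
    rw [← mul_assoc, h f (hu.1.mem_toFinset.1 hf), zero_mul]

/-- Left multiplication by `(μ i ++ [f])*` isolates `a i • 𝐯 (r f)`: as `f` occurs in no `μ j`,
no other `μ j ++ [f]` is a prefix of `μ i ++ [f]` or conversely. -/
theorem sum_smul_path_eq_zero_of_mul_edge_eq_zero {ι : Type*} {S : Finset ι} {μ : ι → List Ed}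
    {f : Ed} (a : ι → K) (hμ : ∀ i ∈ S, f ∉ μ i ∧ ∃ u, IsPath s r u (μ i) (s f))
    (hinj : Set.InjOn μ S) (h : (∑ i ∈ S, a i • 𝐩 (μ i) (s f)) * 𝐞 f = 0) :
    ∑ i ∈ S, a i • 𝐩 (μ i) (s f) = 0 := by
  simp only [Finset.sum_mul, smul_mul_assoc, path_mul_edge] at h
  refine Finset.sum_eq_zero fun i hi => ?_
  obtain ⟨hfi, u, hu⟩ := hμ i hi
  have hcoeff := congrArg (𝐩⋆ (r f) (μ i ++ [f]) * ·) h
  simp only [mul_zero, Finset.mul_sum, mul_smul_comm] at hcoeff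
  rw [Finset.sum_eq_single i (fun j hj hji => ?_) (absurd hi),
    pathStar_mul_path_self (hu.append (.single f))] at hcoeff
  · rw [(smul_eq_zero.1 hcoeff).resolve_right (vertex_ne_zero _), zero_smul]
  · obtain ⟨hfj, uj, huj⟩ := hμ j hj
    have hne : μ j ≠ μ i := fun h => hji (hinj hj hi h)
    rw [pathStar_mul_path_eq_zero _ (huj.append (.single f))
      (not_prefix_append_singleton hfj hne.symm) (not_prefix_append_singleton hfi hne),
      smul_zero]

theorem monomial_cons_mul_sum_edge_mul_ghost {z : V} {μ ν : List Ed} {e : Ed}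
    (hν : IsPath s r (r e) ν z) {H : Finset Ed} (he : e ∈ H) :
    monomial K s r (μ, z, e :: ν) * ∑ h ∈ H, 𝐞 h * 𝐞⋆ h = monomial K s r (μ, z, e :: ν) := by
  rw [Finset.mul_sum, Finset.sum_eq_single e (fun h _ hne => by
    rw [← mul_assoc, monomial_cons_mul_edge_of_ne hne.symm, zero_mul]) (absurd he),
    ← mul_assoc, monomial_cons_mul_edge hν, monomial_mul_ghost]

theorem sum_smul_monomial_eq_zero_of_mul_edge_eq_zero {f : Ed}
    {T : Finset (List Ed × V × List Ed)} (c : List Ed × V × List Ed → K)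
    (hT : ∀ t ∈ T, IsMonomialAt s r (s f) t ∧ t.2.2 = [] ∧ f ∉ t.1)
    (h : (∑ t ∈ T, c t • monomial K s r t) * 𝐞 f = 0) : ∑ t ∈ T, c t • monomial K s r t = 0 := by
  have hT' : ∀ t ∈ T, t.2 = (s f, []) ∧ f ∉ t.1 ∧ ∃ u, IsPath s r u t.1 (s f) := by
    rintro ⟨μ, z, ν⟩ ht
    obtain ⟨⟨⟨u, hμ⟩, hν⟩, rfl, hfμ⟩ := hT _ ht
    obtain rfl := IsPath.nil_iff.1 hν
    exact ⟨rfl, hfμ, u, hμ⟩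
  have hpath : ∀ t ∈ T, monomial K s r t = 𝐩 t.1 (s f) := by
    rintro ⟨μ, z, ν⟩ ht
    obtain ⟨h₂, -⟩ := hT' _ ht
    obtain ⟨rfl, rfl⟩ := Prod.mk.inj h₂
    exact monomial_nil μ (s f)
  rw [Finset.sum_congr rfl fun t ht => by rw [hpath t ht]] at h ⊢
  refine sum_smul_path_eq_zero_of_mul_edge_eq_zero c (fun t ht => (hT' t ht).2)
    (fun t ht t' ht' h => Prod.ext h ((hT' t ht).1.trans (hT' t' ht').1.symm)) h

theorem eq_zero_of_mul_edge_eq_zero_of_infinite {u : V} (hu : {e | s e = u}.Infinite) {d : ℕ}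
    {y : LeavittPathAlgebra K s r} (hy : y ∈ monomialSpan K s r d u)
    (h : ∀ f, s f = u → y * 𝐞 f = 0) : y = 0 := by
  obtain ⟨c, hc, rfl⟩ := (Finsupp.mem_span_image_iff_linearCombination K).1 hy
  have hT (t) (ht : t ∈ c.support) : IsMonomialAt s r u t := (hc ht).1
  obtain ⟨f, hfu, hfT⟩ :=
    hu.exists_notMem_finset (c.support.biUnion fun t => (t.1 ++ t.2.2).toFinset)
  have hfresh (t) (ht : t ∈ c.support) : f ∉ t.1 ∧ f ∉ t.2.2 := by
    simpa [not_or] using fun hf => hfT (Finset.mem_biUnion.2 ⟨t, ht, List.mem_toFinset.2 hf⟩)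
  set H := (c.support.biUnion fun t => t.2.2.toFinset).filter (s · = u)
  rw [Finsupp.linearCombination_apply, Finsupp.sum,
    ← Finset.sum_filter_add_sum_filter_not c.support (fun t => t.2.2 = [])] at h ⊢
  set y₁ := ∑ t ∈ c.support with ¬t.2.2 = [], c t • monomial K s r t
  have hy₁ : y₁ * 𝐞 f = 0 ∧ y₁ * ∑ e ∈ H, 𝐞 e * 𝐞⋆ e = y₁ := by
    simp only [y₁, Finset.sum_mul]
    refine ⟨Finset.sum_eq_zero fun t ht => ?_, Finset.sum_congr rfl fun t ht => ?_⟩ <;>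
    obtain ⟨ht, hne⟩ := Finset.mem_filter.1 ht <;>
    obtain ⟨μ, z, _ | ⟨e, ν⟩⟩ := t <;> try exact absurd rfl hne
    · rw [smul_mul_assoc, monomial_cons_mul_edge_of_ne
        (fun hef => (hfresh _ ht).2 (by simp [hef])), smul_zero]
    · obtain ⟨hue, hν⟩ := IsPath.cons_iff.1 (hT _ ht).2
      rw [smul_mul_assoc, monomial_cons_mul_sum_edge_mul_ghost hν
        (Finset.mem_filter.2 ⟨Finset.mem_biUnion.2 ⟨_, ht, by simp⟩, hue.symm⟩)]
  have hy₀ : ∑ t ∈ c.support with t.2.2 = [], c t • monomial K s r t = 0 := by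
    subst hfu
    refine sum_smul_monomial_eq_zero_of_mul_edge_eq_zero (f := f) c (fun t ht => ?_) ?_
    · obtain ⟨ht, hnil⟩ := Finset.mem_filter.1 ht
      exact ⟨hT t ht, hnil, (hfresh t ht).1⟩
    · simpa [add_mul, hy₁.1] using h f rfl
  rw [hy₀, zero_add] at h ⊢
  rw [← hy₁.2, Finset.mul_sum]
  exact Finset.sum_eq_zero fun e he => by
    rw [← mul_assoc, h e (Finset.mem_filter.1 he).2, zero_mul]

/-- Each step multiplies by an edge `f` with `y * 𝐞 f ≠ 0`, which shortens the ghost parts; such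
an `f` exists unless the vertex is a sink, where there are no ghost parts left. -/
theorem exists_mul_path_ne_zero_mem_monomialSpan_zero :
    ∀ (d : ℕ) {u : V} {y : LeavittPathAlgebra K s r}, y ∈ monomialSpan K s r d u → y ≠ 0 →
      ∃ l w, IsPath s r u l w ∧ y * 𝐩 l w ≠ 0 ∧ y * 𝐩 l w ∈ monomialSpan K s r 0 w
  | 0, u, y, hy, hy0 => ⟨[], u, .nil u, by rwa [path_nil, mul_vertex_of_mem_monomialSpan hy],
      by rwa [path_nil, mul_vertex_of_mem_monomialSpan hy]⟩
  | d + 1, u, y, hy, hy0 => by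
    by_cases hf : ∃ f, s f = u ∧ y * 𝐞 f ≠ 0
    · obtain ⟨f, rfl, hf⟩ := hf
      obtain ⟨l, w, hl, hne, hmem⟩ :=
        exists_mul_path_ne_zero_mem_monomialSpan_zero d (mul_edge_mem_monomialSpan rfl hy) hf
      refine ⟨f :: l, w, .cons hl, ?_, ?_⟩ <;> rwa [path_cons, ← mul_assoc]
    push Not at hf
    by_cases hsink : ∀ e, s e ≠ u
    · exact exists_mul_path_ne_zero_mem_monomialSpan_zero 0
        (monomialSpan_le_zero_of_forall_ne hsink _ hy) hy0
    push Not at hsink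
    by_cases hfin : {e | s e = u}.Finite
    · exact absurd (eq_zero_of_mul_edge_eq_zero_of_isRegularVertex ⟨hfin, hsink⟩
        (mul_vertex_of_mem_monomialSpan hy) hf) hy0
    · exact absurd (eq_zero_of_mul_edge_eq_zero_of_infinite hfin hy hf) hy0

/-! ### Condition (L) -/

theorem IsPath.isChain {u w : V} {l : List Ed} (h : IsPath s r u l w) :
    l.IsChain fun e f => r e = s f := by
  induction h with
  | nil => exact List.isChain_nil
  | @cons e l w hl ih =>
    rcases l with _ | ⟨f, l⟩
    · exact List.isChain_singleton e
    · exact List.isChain_cons_cons.2 ⟨(IsPath.cons_iff.1 hl).1, ih⟩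

theorem IsPath.range_getLast {u w : V} {l : List Ed} (h : IsPath s r u l w) (hne : l ≠ []) :
    r (l.getLast hne) = w := by
  induction h with
  | nil => exact absurd rfl hne
  | @cons e l w hl ih =>
    rcases l with _ | ⟨f, l⟩
    · exact IsPath.nil_iff.1 hl
    · rw [List.getLast_cons (List.cons_ne_nil f l)]
      exact ih _

theorem IsPath.isClosedPath {v : V} {l : List Ed} (h : IsPath s r v l v) (hne : l ≠ []) :
    IsClosedPath s r l v where
  ne := hne
  chain := h.isChain
  src := by
    obtain ⟨e, l, rfl⟩ := List.exists_cons_of_ne_nil hne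
    exact (IsPath.cons_iff.1 h).1.symm
  rng := h.range_getLast hne

theorem exists_isCycle_subset {u w : V} {δ : List Ed} (h : IsPath s r u δ w)
    (hδ : ¬(δ.map s).Nodup) : ∃ σ v, IsCycle s r σ v ∧ σ ⊆ δ := by
  induction h with
  | nil => exact absurd List.nodup_nil hδ
  | @cons e t w ht ih =>
    by_cases hnd : (t.map s).Nodup
    swap
    · obtain ⟨σ, v, hσ, hsub⟩ := ih hnd
      exact ⟨σ, v, hσ, List.Subset.trans hsub (List.subset_cons_self e t)⟩
    obtain ⟨g, hg, hge⟩ := List.mem_map.1 (by simpa [hnd] using hδ : s e ∈ t.map s)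
    obtain ⟨t₁, t₂, rfl⟩ := List.append_of_mem hg
    obtain ⟨m, h₁, h₂⟩ := ht.of_append
    obtain rfl : m = s g := (IsPath.cons_iff.1 h₂).1
    have hcycle : IsPath s r (s e) (e :: t₁) (s e) := hge ▸ IsPath.cons h₁
    refine ⟨e :: t₁, s e, ⟨hcycle.isClosedPath (List.cons_ne_nil e t₁), ?_⟩, ?_⟩
    · rw [List.map_append, List.nodup_append] at hnd
      refine List.nodup_cons.2 ⟨fun he => hnd.2.2 _ he (s g) (by simp) hge.symm, hnd.1⟩
    · exact List.cons_subset_cons e (List.subset_append_left t₁ _)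

/-- `τ` follows `δ` up to the exit of a cycle contained in `δ`, and then takes the exit. -/
theorem exists_path_not_prefix (hL : ConditionL s r) {w : V} {δ : List Ed}
    (hδ : IsPath s r w δ w) (hne : δ ≠ []) : ∃ τ w', IsPath s r w τ w' ∧ ¬τ <+: δ ++ τ := by
  have hdup : ¬((δ ++ δ).map s).Nodup := by
    obtain ⟨e, t, rfl⟩ := List.exists_cons_of_ne_nil hne
    simp [List.nodup_append]
  obtain ⟨σ, v, hσ, hsub⟩ := exists_isCycle_subset (hδ.append hδ) hdup
  obtain ⟨g, e, he, hge, hge'⟩ := hL σ v hσ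
  obtain ⟨δ₁, δ₂, rfl⟩ := List.append_of_mem (by simpa using hsub he : e ∈ δ)
  obtain ⟨m, h₁, h₂⟩ := hδ.of_append
  obtain rfl : m = s e := (IsPath.cons_iff.1 h₂).1
  refine ⟨δ₁ ++ [g], r g, h₁.append (hge ▸ .single g), fun h => hge' ?_⟩
  rw [List.append_assoc, List.prefix_append_right_inj, List.cons_append] at h
  exact (List.cons_prefix_cons.1 h).1

theorem vertex_mem_of_smul_vertex_mem {I : AddSubgroup (LeavittPathAlgebra K s r)}
    (hI : IsTwoSidedIdealSG I) {c : K} (hc : c ≠ 0) {w : V} (h : c • 𝐯 w ∈ I) : 𝐯 w ∈ I := by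
  have := (hI (c⁻¹ • 𝐯 w) _ h).1
  rwa [smul_mul_smul, inv_mul_cancel₀ hc, one_smul, vertex_mul_self] at this

theorem pathStar_mul_smul_vertex_add_sum_mul_path {ι : Type*} {F : Finset ι} {w w' : V}
    {τ : List Ed} (hτ : IsPath s r w τ w') (c : K) {δ : ι → List Ed} (a : ι → K)
    (hδ : ∀ i ∈ F, IsPath s r w (δ i) w) :
    𝐩⋆ w' τ * (c • 𝐯 w + ∑ i ∈ F, a i • 𝐩 (δ i) w) * 𝐩 τ w' =
      c • 𝐯 w' + ∑ i ∈ F with τ <+: δ i ++ τ, a i • 𝐩 ((δ i ++ τ).drop τ.length) w' := by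
  simp only [mul_add, add_mul, Finset.mul_sum, Finset.sum_mul, mul_smul_comm, smul_mul_assoc]
  rw [pathStar_mul_vertex_mul_path hτ, Finset.sum_filter]
  congr 1
  refine Finset.sum_congr rfl fun i hi => ?_
  rw [pathStar_mul_path_mul_path (hδ i hi) hτ, smul_ite, smul_zero]

/-- Conjugation `τ* (·) τ` by a path `τ` from `exists_path_not_prefix` removes at least one
closed path and keeps the vertex term. -/
theorem exists_vertex_mem_of_smul_vertex_add_sum_mem (hL : ConditionL s r)
    {I : AddSubgroup (LeavittPathAlgebra K s r)} (hI : IsTwoSidedIdealSG I) {ι : Type*}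
    (F : Finset ι) : ∀ {w : V} {c : K} {δ : ι → List Ed} (a : ι → K), c ≠ 0 →
      (∀ i ∈ F, IsPath s r w (δ i) w ∧ δ i ≠ []) →
      c • 𝐯 w + ∑ i ∈ F, a i • 𝐩 (δ i) w ∈ I → ∃ v, 𝐯 v ∈ I := by
  induction F using Finset.strongInduction with
  | H F ih =>
  intro w c δ a hc hδ hmem
  rcases F.eq_empty_or_nonempty with rfl | ⟨i₀, hi₀⟩
  · rw [Finset.sum_empty, add_zero] at hmem
    exact ⟨w, vertex_mem_of_smul_vertex_mem hI hc hmem⟩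
  obtain ⟨τ, w', hτ, hτi₀⟩ := exists_path_not_prefix hL (hδ i₀ hi₀).1 (hδ i₀ hi₀).2
  refine ih _ ((Finset.filter_ssubset (p := fun i => τ <+: δ i ++ τ)).2 ⟨i₀, hi₀, hτi₀⟩) (w := w')
    (δ := fun i => (δ i ++ τ).drop τ.length)
    a hc (fun i hi => ?_) ?_
  · obtain ⟨hi, δ', hδ'⟩ := Finset.mem_filter.1 hi
    obtain ⟨hp, hne⟩ := hδ i hi
    simp only [← hδ', List.drop_left]
    refine ⟨(hδ' ▸ hp.append hτ).right_of_append hτ, ?_⟩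
    rintro rfl
    exact hne (by simpa using congrArg List.length hδ')
  · rw [← pathStar_mul_smul_vertex_add_sum_mul_path hτ c a fun i hi => (hδ i hi).1]
    exact (hI _ _ (hI _ _ hmem).1).2

/-- Left multiplication by `μ₁*`, for a shortest path `μ₁` in the support, turns a nonzero
combination of paths ending at `w` into `c • 𝐯 w` plus closed paths at `w`. -/
theorem exists_vertex_mem_of_mem_monomialSpan_zero (hL : ConditionL s r)
    {I : AddSubgroup (LeavittPathAlgebra K s r)} (hI : IsTwoSidedIdealSG I) {w : V}
    {b : LeavittPathAlgebra K s r} (hb : b ∈ monomialSpan K s r 0 w) (hb0 : b ≠ 0)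
    (hbI : b ∈ I) : ∃ v, 𝐯 v ∈ I := by
  obtain ⟨c, hc, rfl⟩ := (Finsupp.mem_span_image_iff_linearCombination K).1 hb
  have hT : ∀ t ∈ c.support, t.2 = (w, []) ∧ ∃ u, IsPath s r u t.1 w := by
    rintro ⟨μ, z, ν⟩ ht
    obtain ⟨⟨⟨u, hμ⟩, hν⟩, hd⟩ := hc ht
    obtain rfl := List.eq_nil_of_length_eq_zero (Nat.le_zero.1 hd)
    obtain rfl := IsPath.nil_iff.1 hν
    exact ⟨rfl, u, hμ⟩
  have hpath (t) (ht : t ∈ c.support) : monomial K s r t = 𝐩 t.1 w := by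
    obtain ⟨μ, z, ν⟩ := t
    obtain ⟨rfl, rfl⟩ := Prod.mk.inj (hT _ ht).1
    exact monomial_nil μ z
  obtain ⟨t₁, ht₁, hmin⟩ := c.support.exists_min_image (fun t => t.1.length)
    (Finsupp.support_nonempty_iff.2 (by rintro rfl; exact hb0 (map_zero _)))
  obtain ⟨u₁, hu₁⟩ := (hT t₁ ht₁).2
  have key : 𝐩⋆ w t₁.1 * Finsupp.linearCombination K (monomial K s r) c =
      c t₁ • 𝐯 w + ∑ t ∈ c.support.erase t₁ with t₁.1 <+: t.1 ∧ IsPath s r u₁ t.1 w,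
        c t • 𝐩 (t.1.drop t₁.1.length) w := by
    rw [Finsupp.linearCombination_apply, Finsupp.sum, ← Finset.add_sum_erase _ _ ht₁, mul_add,
      Finset.mul_sum, Finset.sum_filter, hpath t₁ ht₁, mul_smul_comm, pathStar_mul_path_self hu₁]
    refine congrArg _ (Finset.sum_congr rfl fun t ht => ?_)
    obtain ⟨hne, ht⟩ := Finset.mem_erase.1 ht
    obtain ⟨u, hu⟩ := (hT t ht).2
    have hne' : t.1 ≠ t₁.1 := fun h => hne (Prod.ext h ((hT t ht).1.trans (hT t₁ ht₁).1.symm))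
    rw [hpath t ht, mul_smul_comm, pathStar_mul_path_of_length_le hu₁ hu (hmin t ht) hne',
      smul_ite, smul_zero]
  refine exists_vertex_mem_of_smul_vertex_add_sum_mem hL hI _ _ (Finsupp.mem_support_iff.1 ht₁)
    (fun t ht => ?_) (key ▸ (hI _ _ hbI).1)
  obtain ⟨ht, ⟨δ, hδ⟩, hp⟩ := Finset.mem_filter.1 ht
  rw [← hδ, List.drop_left]
  refine ⟨(hδ ▸ hp).right_of_append hu₁, ?_⟩
  rintro rfl
  exact (Finset.mem_erase.1 ht).1 (Prod.ext (by simpa using hδ.symm)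
    ((hT t (Finset.mem_of_mem_erase ht)).1.trans (hT t₁ ht₁).1.symm))

end LPA

theorem nonzero_ideal_contains_vertex_general
    {V Ed : Type} (s r : Ed → V) (K : Type) [Field K]
    (hL : ConditionL s r)
    (I : AddSubgroup ↥(LeavittPathAlgebra K s r)) (hI : IsTwoSidedIdealSG I)
    (hne : I ≠ ⊥) :
    ∃ v : V, LPA.vertex K s r v ∈ I := by
  obtain ⟨x, hxI, hx0⟩ := I.bot_or_exists_ne_zero.resolve_left hne
  obtain ⟨d, w, hxw, hxwd⟩ := LPA.exists_mul_vertex_ne_zero_mem_monomialSpan hx0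
  obtain ⟨l, w', -, hne', hmem⟩ := LPA.exists_mul_path_ne_zero_mem_monomialSpan_zero d hxwd hxw
  exact LPA.exists_vertex_mem_of_mem_monomialSpan_zero hL hI hmem hne' ((hI _ _ (hI _ _ hxI).2).2)

/-- If `E` satisfies Condition (L), then every nonzero two-sided ideal of `L_K(E)`
contains a vertex. -/
theorem nonzero_ideal_contains_vertex
    {V Ed : Type} [Countable V] [Countable Ed] (s r : Ed → V) (K : Type) [Field K]
    (hL : ConditionL s r)
    (I : AddSubgroup ↥(LeavittPathAlgebra K s r)) (hI : IsTwoSidedIdealSG I)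
    (hne : I ≠ ⊥) :
    ∃ v : V, LPA.vertex K s r v ∈ I :=
  nonzero_ideal_contains_vertex_general s r K hL I hI hne

end
end

section
/- Let R and S be semiprime idempotent rings admitting a surjective Morita context (R, S, N, M, φ, ψ). Then R has nonzero socle if and only if S has nonzero socle. -/
set_option synthInstance.maxHeartbeats 1000000
set_option maxHeartbeats 1000000

noncomputable section

/-!
In a semiprime ring the socle is nonzero exactly when there is a nonzero idempotent `e` whose
corner ring `eRe` is a division ring: by Brauer's lemma every minimal left ideal is `Re` for such
an `e`, and conversely such an `Re` is minimal. These idempotents pass along a surjective Morita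
context. Since `e = e * e * e`, surjectivity of `φ` gives a nonzero `e * φ n₀ m₀ * e ∈ eRe`, and
multiplying by its inverse writes `e = φ n m` with `e • n = n` and `m • e = m`. Then
`x ↦ ψ m (x • n)` is multiplicative on `eRe` and maps it onto the corner ring of the idempotent
`f = ψ m n`, with `z ↦ φ n (z • m)` as inverse, so `fSf` is a division ring as well.
-/

section Socle

variable {R : Type} [NonUnitalRing R]

theorem IsSemiprimeRing.eq_zero_of_mem (hR : IsSemiprimeRing R) {s : Set R}
    (hl : ∀ a, ∀ x ∈ s, a * x ∈ s) (hr : ∀ a, ∀ x ∈ s, x * a ∈ s)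
    (hs : ∀ x ∈ s, ∀ y ∈ s, x * y = 0) {x : R} (hx : x ∈ s) : x = 0 := by
  have hideal : IsTwoSidedIdealSG (AddSubgroup.closure s) := by
    intro a y hy
    induction hy using AddSubgroup.closure_induction with
    | mem y hy => exact ⟨AddSubgroup.subset_closure (hl a y hy),
        AddSubgroup.subset_closure (hr a y hy)⟩
    | zero => simp
    | add y z _ _ hy hz =>
      rw [mul_add, add_mul]; exact ⟨add_mem hy.1 hz.1, add_mem hy.2 hz.2⟩
    | neg y _ hy => rw [mul_neg, neg_mul]; exact ⟨neg_mem hy.1, neg_mem hy.2⟩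
  have hsq : ∀ y ∈ AddSubgroup.closure s, ∀ z ∈ AddSubgroup.closure s, y * z = 0 := by
    intro y hy z hz
    induction hy, hz using AddSubgroup.closure_induction₂ with
    | mem y z hy hz => exact hs y hy z hz
    | zero_left | zero_right => simp
    | add_left | add_right => simp_all [mul_add, add_mul]
    | neg_left | neg_right => simp_all
  have hbot := hR _ hideal hsq
  simpa [hbot] using AddSubgroup.subset_closure (k := s) hx

theorem IsSemiprimeRing.eq_zero_of_forall_mul_mul_eq_zero (hR : IsSemiprimeRing R) {x : R}
    (hx : ∀ r, x * r * x = 0) : x = 0 := by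
  have hRxR : ∀ a b, a * x * b = 0 := by
    refine fun a b => hR.eq_zero_of_mem (s := Set.range fun p : R × R => p.1 * x * p.2)
      ?_ ?_ ?_ ⟨(a, b), rfl⟩
    · rintro r _ ⟨⟨a, b⟩, rfl⟩; exact ⟨(r * a, b), by simp only [mul_assoc]⟩
    · rintro r _ ⟨⟨a, b⟩, rfl⟩; exact ⟨(a, b * r), by simp only [mul_assoc]⟩
    · rintro _ ⟨⟨a, b⟩, rfl⟩ _ ⟨⟨c, d⟩, rfl⟩
      calc a * x * b * (c * x * d) = a * (x * (b * c) * x) * d := by simp only [mul_assoc]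
        _ = 0 := by rw [hx, mul_zero, zero_mul]
  have hRx : ∀ a, a * x = 0 := by
    refine fun a => hR.eq_zero_of_mem (s := Set.range (· * x)) ?_ ?_ ?_ ⟨a, rfl⟩
    · rintro r _ ⟨a, rfl⟩; exact ⟨r * a, mul_assoc r a x⟩
    · rintro r _ ⟨a, rfl⟩; exact ⟨0, by simp [hRxR]⟩
    · rintro _ ⟨a, rfl⟩ _ ⟨b, rfl⟩; rw [← mul_assoc, hRxR, zero_mul]
  have hxR : ∀ b, x * b = 0 := by
    refine fun b => hR.eq_zero_of_mem (s := Set.range (x * ·)) ?_ ?_ ?_ ⟨b, rfl⟩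
    · rintro r _ ⟨b, rfl⟩; exact ⟨0, by simp [← mul_assoc, hRxR]⟩
    · rintro r _ ⟨b, rfl⟩; exact ⟨b * r, (mul_assoc x b r).symm⟩
    · rintro _ ⟨a, rfl⟩ _ ⟨b, rfl⟩; rw [← mul_assoc, hx, zero_mul]
  refine hR.eq_zero_of_mem (s := {0, x}) ?_ ?_ ?_ (Set.mem_insert_of_mem _ rfl)
  · rintro a _ (rfl | rfl) <;> simp [hRx]
  · rintro a _ (rfl | rfl) <;> simp [hxR]
  · rintro _ (rfl | rfl) _ (rfl | rfl) <;> simp [hxR]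

theorem IsMinimalLeftIdeal.eq_of_le {I J : AddSubgroup R} (hI : IsMinimalLeftIdeal I)
    (hJ : IsLeftIdeal J) (hJI : J ≤ I) (hJ0 : J ≠ ⊥) : J = I := by
  by_contra hne
  exact hJ0 (hI.2.2 J hJ (lt_of_le_of_ne hJI hne))

theorem isLeftIdeal_principalLeft (a : R) : IsLeftIdeal (principalLeft a) :=
  fun b _ hx => principalLeft.mul_mem a b hx

theorem principalLeft_ne_bot_of_mul_self {e : R} (he : e ≠ 0) (hee : e * e = e) :
    principalLeft e ≠ ⊥ := by
  rw [Ne, AddSubgroup.eq_bot_iff_forall]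
  exact fun h => he (h e ⟨e, hee⟩)

theorem IsMinimalLeftIdeal.exists_idempotent (hR : IsSemiprimeRing R) {I : AddSubgroup R}
    (hI : IsMinimalLeftIdeal I) : ∃ e ∈ I, e ≠ 0 ∧ e * e = e := by
  obtain ⟨a₀, ha₀I, ha₀⟩ := I.bot_or_exists_ne_zero.resolve_left hI.2.1
  obtain ⟨a, haI, i, hiI, hia⟩ : ∃ a ∈ I, ∃ i ∈ I, i * a ≠ 0 := by
    by_contra! h
    refine ha₀ (hR.eq_zero_of_forall_mul_mul_eq_zero fun r => ?_)
    rw [mul_assoc]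
    exact h _ (hI.1 r a₀ ha₀I) a₀ ha₀I
  have ha : a ≠ 0 := by rintro rfl; exact hia (mul_zero i)
  have hIa : I.map (AddMonoidHom.mulRight a) = I := by
    refine hI.eq_of_le ?_ ?_ ?_
    · rintro r _ ⟨u, huI, rfl⟩
      exact ⟨r * u, hI.1 r u huI, mul_assoc r u a⟩
    · rintro _ ⟨u, huI, rfl⟩
      exact hI.1 u a haI
    · rw [Ne, AddSubgroup.eq_bot_iff_forall]
      exact fun h => hia (h _ ⟨i, hiI, rfl⟩)
  obtain ⟨e, heI, hea⟩ : ∃ e ∈ I, e * a = a := by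
    rw [← hIa] at haI
    simpa using haI
  have hann : I ⊓ (AddMonoidHom.mulRight a).ker = ⊥ := by
    refine hI.2.2 _ ?_ (lt_of_le_of_ne inf_le_left fun h => ?_)
    · intro r u hu
      rw [AddSubgroup.mem_inf, AddMonoidHom.mem_ker, AddMonoidHom.mulRight_apply] at hu ⊢
      exact ⟨hI.1 r u hu.1, by rw [mul_assoc, hu.2, mul_zero]⟩
    · have he : e ∈ I ⊓ (AddMonoidHom.mulRight a).ker := by rw [h]; exact heI
      exact ha (hea ▸ (AddSubgroup.mem_inf.1 he).2)
  have hee : e * e - e ∈ I ⊓ (AddMonoidHom.mulRight a).ker :=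
    AddSubgroup.mem_inf.2 ⟨sub_mem (hI.1 e e heI) heI, by simp [sub_mul, mul_assoc, hea]⟩
  rw [hann, AddSubgroup.mem_bot, sub_eq_zero] at hee
  exact ⟨e, heI, by rintro rfl; exact ha (by simpa using hea.symm), hee⟩

/-- The corner ring `eRe` is a division ring: every nonzero `x ∈ eRe` has a left inverse, which
can be taken in `eRe` by replacing `y` with `e * y * e`. -/
structure IsDivisionIdempotent (e : R) : Prop where
  ne_zero : e ≠ 0
  mul_self : e * e = e
  exists_mul_eq : ∀ x, e * x * e = x → x ≠ 0 → ∃ y, y * x = e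

theorem isDivisionIdempotent_of_isMinimalLeftIdeal (hR : IsSemiprimeRing R) {e : R}
    (he : e ≠ 0) (hee : e * e = e) (hmin : IsMinimalLeftIdeal (principalLeft e)) :
    IsDivisionIdempotent e := by
  refine ⟨he, hee, fun x hx hx0 => ?_⟩
  have hxe : x * e = x := by rw [← hx, mul_assoc, hee]
  have hRx : principalLeft x = principalLeft e := by
    refine hmin.eq_of_le (isLeftIdeal_principalLeft x) ?_ ?_
    · rintro _ ⟨r, rfl⟩
      exact ⟨r * x, show r * x * e = r * x by rw [mul_assoc, hxe]⟩
    · rw [Ne, AddSubgroup.eq_bot_iff_forall]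
      exact fun h => hx0 (hR.eq_zero_of_forall_mul_mul_eq_zero fun r => h _ ⟨x * r, rfl⟩)
  obtain ⟨y, hy⟩ : e ∈ principalLeft x := hRx ▸ ⟨e, hee⟩
  exact ⟨y, hy⟩

theorem IsDivisionIdempotent.isMinimalLeftIdeal (hR : IsSemiprimeRing R) {e : R}
    (he : IsDivisionIdempotent e) : IsMinimalLeftIdeal (principalLeft e) := by
  refine ⟨isLeftIdeal_principalLeft e, principalLeft_ne_bot_of_mul_self he.ne_zero he.mul_self,
    fun J hJ hJe => ?_⟩
  refine J.bot_or_exists_ne_zero.resolve_right ?_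
  rintro ⟨x, hxJ, hx0⟩
  obtain ⟨s, rfl⟩ : x ∈ principalLeft e := hJe.le hxJ
  obtain ⟨t, ht⟩ : ∃ t, e * (t * (s * e)) ≠ 0 := by
    by_contra! h
    refine hx0 (hR.eq_zero_of_forall_mul_mul_eq_zero fun r => ?_)
    simp only [mul_assoc] at h ⊢
    rw [h, mul_zero]
  obtain ⟨y, hy⟩ := he.exists_mul_eq (e * (t * (s * e)))
    (by simp only [← mul_assoc, he.mul_self]; simp only [mul_assoc, he.mul_self]) ht
  have heJ : e ∈ J := hy ▸ hJ y _ (hJ e _ (hJ t _ hxJ))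
  exact hJe.not_ge fun _ ⟨r, hr⟩ => hr ▸ hJ r e heJ

theorem rsocle_ne_bot_iff (hR : IsSemiprimeRing R) :
    rsocle R ≠ ⊥ ↔ ∃ e : R, IsDivisionIdempotent e := by
  constructor
  · intro h
    obtain ⟨I, hI, -⟩ : ∃ I, IsMinimalLeftIdeal I ∧ I ≠ ⊥ := by
      simpa [rsocle, sSup_eq_bot] using h
    obtain ⟨e, heI, he, hee⟩ := hI.exists_idempotent hR
    have hIe : principalLeft e = I :=
      hI.eq_of_le (isLeftIdeal_principalLeft e) (fun _ ⟨r, hr⟩ => hr ▸ hI.1 r e heI)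
        (principalLeft_ne_bot_of_mul_self he hee)
    exact ⟨e, isDivisionIdempotent_of_isMinimalLeftIdeal hR he hee (hIe ▸ hI)⟩
  · rintro ⟨e, he⟩
    refine ne_bot_of_le_ne_bot ?_ (le_sSup (he.isMinimalLeftIdeal hR))
    exact principalLeft_ne_bot_of_mul_self he.ne_zero he.mul_self

end Socle

section MoritaContext

variable {R S N M : Type} [NonUnitalRing R] [NonUnitalRing S]
  {rn : R → N → N} {ns : N → S → N} {sm : S → M → M} {mr : M → R → M}
  {φ : N → M → R} {ψ : M → N → S}

theorem pairing_mul_pairing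
    (hrn_mul : ∀ (r₁ r₂ : R) (n : N), rn (r₁ * r₂) n = rn r₁ (rn r₂ n))
    (hφ_left : ∀ (a : R) (n : N) (m : M), φ (rn a n) m = a * φ n m)
    (hψ_right : ∀ (m : M) (n : N) (t : S), ψ m (ns n t) = ψ m n * t)
    (hassoc₁ : ∀ (n : N) (m : M) (n' : N), rn (φ n m) n' = ns n (ψ m n'))
    (x y : R) (m m' : M) (n n' : N) :
    ψ m (rn x n) * ψ m' (rn y n') = ψ m (rn (x * φ n m' * y) n') := by
  rw [← hψ_right, ← hassoc₁, hφ_left, ← hrn_mul]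

theorem IsDivisionIdempotent.exists_pairing_eq {e : R} (he : IsDivisionIdempotent e)
    (hrn_mul : ∀ (r₁ r₂ : R) (n : N), rn (r₁ * r₂) n = rn r₁ (rn r₂ n))
    (hmr_mul : ∀ (m : M) (a₁ a₂ : R), mr (mr m a₁) a₂ = mr m (a₁ * a₂))
    (hφ_left : ∀ (a : R) (n : N) (m : M), φ (rn a n) m = a * φ n m)
    (hφ_right : ∀ (n : N) (m : M) (a : R), φ n (mr m a) = φ n m * a)
    (hφ_surj : ∀ x : R, x ∈ AddSubgroup.closure (Set.range fun p : N × M => φ p.1 p.2)) :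
    ∃ n m, φ n m = e ∧ rn e n = n ∧ mr m e = m := by
  obtain ⟨n₀, m₀, ha⟩ : ∃ n₀ m₀, e * φ n₀ m₀ * e ≠ 0 := by
    by_contra! h
    have hker : AddSubgroup.closure (Set.range fun p : N × M => φ p.1 p.2) ≤
        ((AddMonoidHom.mulRight e).comp (AddMonoidHom.mulLeft e)).ker := by
      rw [AddSubgroup.closure_le]
      rintro _ ⟨⟨n, m⟩, rfl⟩
      exact h n m
    have he0 := hker (hφ_surj e)
    simp only [AddMonoidHom.mem_ker, AddMonoidHom.coe_comp, Function.comp_apply,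
      AddMonoidHom.coe_mulLeft, AddMonoidHom.coe_mulRight, he.mul_self] at he0
    exact he.ne_zero he0
  obtain ⟨b, hb⟩ := he.exists_mul_eq _
    (by simp only [← mul_assoc, he.mul_self]; simp only [mul_assoc, he.mul_self]) ha
  refine ⟨rn (e * b * e) n₀, mr m₀ e, ?_, ?_, by rw [hmr_mul, he.mul_self]⟩
  · calc φ (rn (e * b * e) n₀) (mr m₀ e) = e * (b * (e * φ n₀ m₀ * e)) := by
          rw [hφ_right, hφ_left]; simp only [mul_assoc]
      _ = e := by rw [hb, he.mul_self]
  · rw [← hrn_mul, ← mul_assoc, ← mul_assoc, he.mul_self]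

theorem IsDivisionIdempotent.swap_pairing [AddCommGroup N] [AddCommGroup M] {e : R}
    (he : IsDivisionIdempotent e) {n : N} {m : M}
    (hnm : φ n m = e) (hn : rn e n = n) (hm : mr m e = m)
    (hrn_addl : ∀ (r₁ r₂ : R) (n : N), rn (r₁ + r₂) n = rn r₁ n + rn r₂ n)
    (hrn_mul : ∀ (r₁ r₂ : R) (n : N), rn (r₁ * r₂) n = rn r₁ (rn r₂ n))
    (hsm_addl : ∀ (t₁ t₂ : S) (m : M), sm (t₁ + t₂) m = sm t₁ m + sm t₂ m)
    (hM_bimod : ∀ (t : S) (m : M) (a : R), mr (sm t m) a = sm t (mr m a))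
    (hφ_addr : ∀ (n : N) (m₁ m₂ : M), φ n (m₁ + m₂) = φ n m₁ + φ n m₂)
    (hψ_addr : ∀ (m : M) (n₁ n₂ : N), ψ m (n₁ + n₂) = ψ m n₁ + ψ m n₂)
    (hφ_left : ∀ (a : R) (n : N) (m : M), φ (rn a n) m = a * φ n m)
    (hφ_right : ∀ (n : N) (m : M) (a : R), φ n (mr m a) = φ n m * a)
    (hψ_left : ∀ (t : S) (m : M) (n : N), ψ (sm t m) n = t * ψ m n)
    (hψ_right : ∀ (m : M) (n : N) (t : S), ψ m (ns n t) = ψ m n * t)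
    (hassoc₁ : ∀ (n : N) (m : M) (n' : N), rn (φ n m) n' = ns n (ψ m n'))
    (hassoc₂ : ∀ (m : M) (n : N) (m' : M), sm (ψ m n) m' = mr m (φ n m')) :
    IsDivisionIdempotent (ψ m n) := by
  have hmul (x y : R) : ψ m (rn x n) * ψ m (rn y n) = ψ m (rn (x * e * y) n) :=
    hnm ▸ pairing_mul_pairing hrn_mul hφ_left hψ_right hassoc₁ x y m m n n
  have hrn_zero : rn 0 n = 0 := (AddMonoidHom.mk' (rn · n) (hrn_addl · · n)).map_zero
  have hsm_zero : sm 0 m = 0 := (AddMonoidHom.mk' (sm · m) (hsm_addl · · m)).map_zero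
  have hφ_zero : φ n 0 = 0 := (AddMonoidHom.mk' (φ n) (hφ_addr n)).map_zero
  have hψ_zero : ψ m 0 = 0 := (AddMonoidHom.mk' (ψ m) (hψ_addr m)).map_zero
  refine ⟨fun hf => he.ne_zero ?_, ?_, fun z hz hz0 => ?_⟩
  · calc e = φ n (sm (ψ m n) m) := by rw [hassoc₂, hφ_right, hnm, he.mul_self]
      _ = 0 := by rw [hf, hsm_zero, hφ_zero]
  · calc ψ m n * ψ m n = ψ m (rn e n) * ψ m (rn e n) := by rw [hn]
      _ = ψ m n := by rw [hmul, he.mul_self, he.mul_self, hn]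
  set x := φ n (sm z m) with hx
  have hxz : ψ m (rn x n) = z := by rw [hassoc₁, hψ_right, hψ_left, ← mul_assoc, hz]
  have hx0 : x ≠ 0 := fun h => hz0 (by rw [← hxz, h, hrn_zero, hψ_zero])
  have hex : e * x = x := by rw [hx, ← hφ_left, hn]
  have hxe : x * e = x := by rw [hx, ← hφ_right, hM_bimod, hm]
  obtain ⟨y, hy⟩ := he.exists_mul_eq x (by rw [hex, hxe]) hx0
  exact ⟨ψ m (rn y n), by rw [← hxz, hmul, mul_assoc y, hex, hy, hn]⟩

theorem exists_isDivisionIdempotent_of_moritaContext [AddCommGroup N] [AddCommGroup M]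
    (hrn_addl : ∀ (r₁ r₂ : R) (n : N), rn (r₁ + r₂) n = rn r₁ n + rn r₂ n)
    (hrn_mul : ∀ (r₁ r₂ : R) (n : N), rn (r₁ * r₂) n = rn r₁ (rn r₂ n))
    (hsm_addl : ∀ (t₁ t₂ : S) (m : M), sm (t₁ + t₂) m = sm t₁ m + sm t₂ m)
    (hmr_mul : ∀ (m : M) (a₁ a₂ : R), mr (mr m a₁) a₂ = mr m (a₁ * a₂))
    (hM_bimod : ∀ (t : S) (m : M) (a : R), mr (sm t m) a = sm t (mr m a))
    (hφ_addr : ∀ (n : N) (m₁ m₂ : M), φ n (m₁ + m₂) = φ n m₁ + φ n m₂)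
    (hψ_addr : ∀ (m : M) (n₁ n₂ : N), ψ m (n₁ + n₂) = ψ m n₁ + ψ m n₂)
    (hφ_left : ∀ (a : R) (n : N) (m : M), φ (rn a n) m = a * φ n m)
    (hφ_right : ∀ (n : N) (m : M) (a : R), φ n (mr m a) = φ n m * a)
    (hψ_left : ∀ (t : S) (m : M) (n : N), ψ (sm t m) n = t * ψ m n)
    (hψ_right : ∀ (m : M) (n : N) (t : S), ψ m (ns n t) = ψ m n * t)
    (hassoc₁ : ∀ (n : N) (m : M) (n' : N), rn (φ n m) n' = ns n (ψ m n'))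
    (hassoc₂ : ∀ (m : M) (n : N) (m' : M), sm (ψ m n) m' = mr m (φ n m'))
    (hφ_surj : ∀ x : R, x ∈ AddSubgroup.closure (Set.range fun p : N × M => φ p.1 p.2)) :
    (∃ e : R, IsDivisionIdempotent e) → ∃ f : S, IsDivisionIdempotent f := by
  rintro ⟨e, he⟩
  obtain ⟨n, m, hnm, hn, hm⟩ := he.exists_pairing_eq hrn_mul hmr_mul hφ_left hφ_right hφ_surj
  exact ⟨ψ m n, he.swap_pairing hnm hn hm hrn_addl hrn_mul hsm_addl hM_bimod hφ_addr hψ_addr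
    hφ_left hφ_right hψ_left hψ_right hassoc₁ hassoc₂⟩

end MoritaContext

theorem morita_context_socle_ne_bot_iff_general
    {R S N M : Type} [NonUnitalRing R] [NonUnitalRing S]
    [AddCommGroup N] [AddCommGroup M]
    (hRsp : IsSemiprimeRing R) (hSsp : IsSemiprimeRing S)
    -- `N` is an `(R,S)`-bimodule
    (rn : R → N → N) (ns : N → S → N)
    (hrn_addl : ∀ (r₁ r₂ : R) (n : N), rn (r₁ + r₂) n = rn r₁ n + rn r₂ n)
    (hrn_mul : ∀ (r₁ r₂ : R) (n : N), rn (r₁ * r₂) n = rn r₁ (rn r₂ n))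
    (hns_mul : ∀ (n : N) (t₁ t₂ : S), ns (ns n t₁) t₂ = ns n (t₁ * t₂))
    (hN_bimod : ∀ (a : R) (n : N) (t : S), ns (rn a n) t = rn a (ns n t))
    -- `M` is an `(S,R)`-bimodule
    (sm : S → M → M) (mr : M → R → M)
    (hsm_addl : ∀ (t₁ t₂ : S) (m : M), sm (t₁ + t₂) m = sm t₁ m + sm t₂ m)
    (hsm_mul : ∀ (t₁ t₂ : S) (m : M), sm (t₁ * t₂) m = sm t₁ (sm t₂ m))
    (hmr_mul : ∀ (m : M) (a₁ a₂ : R), mr (mr m a₁) a₂ = mr m (a₁ * a₂))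
    (hM_bimod : ∀ (t : S) (m : M) (a : R), mr (sm t m) a = sm t (mr m a))
    -- the pairings of the Morita context
    (φ : N → M → R) (ψ : M → N → S)
    (hφ_addr : ∀ (n : N) (m₁ m₂ : M), φ n (m₁ + m₂) = φ n m₁ + φ n m₂)
    (hψ_addr : ∀ (m : M) (n₁ n₂ : N), ψ m (n₁ + n₂) = ψ m n₁ + ψ m n₂)
    -- `φ` is `R`-bilinear and `S`-balanced, `ψ` is `S`-bilinear and `R`-balanced
    (hφ_left : ∀ (a : R) (n : N) (m : M), φ (rn a n) m = a * φ n m)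
    (hφ_right : ∀ (n : N) (m : M) (a : R), φ n (mr m a) = φ n m * a)
    (hψ_left : ∀ (t : S) (m : M) (n : N), ψ (sm t m) n = t * ψ m n)
    (hψ_right : ∀ (m : M) (n : N) (t : S), ψ m (ns n t) = ψ m n * t)
    -- the associativity conditions `(n,m)n' = n[m,n']` and `[m,n]m' = m(n,m')`
    (hassoc₁ : ∀ (n : N) (m : M) (n' : N), rn (φ n m) n' = ns n (ψ m n'))
    (hassoc₂ : ∀ (m : M) (n : N) (m' : M), sm (ψ m n) m' = mr m (φ n m'))
    -- surjectivity of the Morita context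
    (hφ_surj : ∀ x : R, x ∈ AddSubgroup.closure (Set.range fun p : N × M => φ p.1 p.2))
    (hψ_surj : ∀ y : S, y ∈ AddSubgroup.closure (Set.range fun p : M × N => ψ p.1 p.2)) :
    rsocle R ≠ ⊥ ↔ rsocle S ≠ ⊥ := by
  rw [rsocle_ne_bot_iff hRsp, rsocle_ne_bot_iff hSsp]
  exact ⟨exists_isDivisionIdempotent_of_moritaContext hrn_addl hrn_mul hsm_addl hmr_mul hM_bimod
      hφ_addr hψ_addr hφ_left hφ_right hψ_left hψ_right hassoc₁ hassoc₂ hφ_surj,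
    exists_isDivisionIdempotent_of_moritaContext hsm_addl hsm_mul hrn_addl hns_mul hN_bimod
      hψ_addr hφ_addr hψ_left hψ_right hφ_left hφ_right hassoc₂ hassoc₁ hψ_surj⟩

/-- Let `R` and `S` be semiprime idempotent rings admitting a surjective Morita
context `(R, S, N, M, φ, ψ)` (given by biadditive, balanced, associative pairings
`φ : N × M → R` and `ψ : M × N → S` whose images generate `R` and `S` as additive
groups).  Then `R` has nonzero socle if and only if `S` has nonzero socle. -/
theorem morita_context_socle_ne_bot_iff
    {R S N M : Type} [NonUnitalRing R] [NonUnitalRing S]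
    [AddCommGroup N] [AddCommGroup M]
    (hRid : IsIdempotentRing R) (hSid : IsIdempotentRing S)
    (hRsp : IsSemiprimeRing R) (hSsp : IsSemiprimeRing S)
    -- `N` is an `(R,S)`-bimodule
    (rn : R → N → N) (ns : N → S → N)
    (hrn_addl : ∀ (r₁ r₂ : R) (n : N), rn (r₁ + r₂) n = rn r₁ n + rn r₂ n)
    (hrn_addr : ∀ (a : R) (n₁ n₂ : N), rn a (n₁ + n₂) = rn a n₁ + rn a n₂)
    (hrn_mul : ∀ (r₁ r₂ : R) (n : N), rn (r₁ * r₂) n = rn r₁ (rn r₂ n))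
    (hns_addl : ∀ (n₁ n₂ : N) (t : S), ns (n₁ + n₂) t = ns n₁ t + ns n₂ t)
    (hns_addr : ∀ (n : N) (t₁ t₂ : S), ns n (t₁ + t₂) = ns n t₁ + ns n t₂)
    (hns_mul : ∀ (n : N) (t₁ t₂ : S), ns (ns n t₁) t₂ = ns n (t₁ * t₂))
    (hN_bimod : ∀ (a : R) (n : N) (t : S), ns (rn a n) t = rn a (ns n t))
    -- `M` is an `(S,R)`-bimodule
    (sm : S → M → M) (mr : M → R → M)
    (hsm_addl : ∀ (t₁ t₂ : S) (m : M), sm (t₁ + t₂) m = sm t₁ m + sm t₂ m)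
    (hsm_addr : ∀ (t : S) (m₁ m₂ : M), sm t (m₁ + m₂) = sm t m₁ + sm t m₂)
    (hsm_mul : ∀ (t₁ t₂ : S) (m : M), sm (t₁ * t₂) m = sm t₁ (sm t₂ m))
    (hmr_addl : ∀ (m₁ m₂ : M) (a : R), mr (m₁ + m₂) a = mr m₁ a + mr m₂ a)
    (hmr_addr : ∀ (m : M) (a₁ a₂ : R), mr m (a₁ + a₂) = mr m a₁ + mr m a₂)
    (hmr_mul : ∀ (m : M) (a₁ a₂ : R), mr (mr m a₁) a₂ = mr m (a₁ * a₂))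
    (hM_bimod : ∀ (t : S) (m : M) (a : R), mr (sm t m) a = sm t (mr m a))
    -- the pairings of the Morita context
    (φ : N → M → R) (ψ : M → N → S)
    (hφ_addl : ∀ (n₁ n₂ : N) (m : M), φ (n₁ + n₂) m = φ n₁ m + φ n₂ m)
    (hφ_addr : ∀ (n : N) (m₁ m₂ : M), φ n (m₁ + m₂) = φ n m₁ + φ n m₂)
    (hψ_addl : ∀ (m₁ m₂ : M) (n : N), ψ (m₁ + m₂) n = ψ m₁ n + ψ m₂ n)
    (hψ_addr : ∀ (m : M) (n₁ n₂ : N), ψ m (n₁ + n₂) = ψ m n₁ + ψ m n₂)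
    -- `φ` is `R`-bilinear and `S`-balanced, `ψ` is `S`-bilinear and `R`-balanced
    (hφ_left : ∀ (a : R) (n : N) (m : M), φ (rn a n) m = a * φ n m)
    (hφ_right : ∀ (n : N) (m : M) (a : R), φ n (mr m a) = φ n m * a)
    (hφ_bal : ∀ (n : N) (t : S) (m : M), φ (ns n t) m = φ n (sm t m))
    (hψ_left : ∀ (t : S) (m : M) (n : N), ψ (sm t m) n = t * ψ m n)
    (hψ_right : ∀ (m : M) (n : N) (t : S), ψ m (ns n t) = ψ m n * t)
    (hψ_bal : ∀ (m : M) (a : R) (n : N), ψ (mr m a) n = ψ m (rn a n))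
    -- the associativity conditions `(n,m)n' = n[m,n']` and `[m,n]m' = m(n,m')`
    (hassoc₁ : ∀ (n : N) (m : M) (n' : N), rn (φ n m) n' = ns n (ψ m n'))
    (hassoc₂ : ∀ (m : M) (n : N) (m' : M), sm (ψ m n) m' = mr m (φ n m'))
    -- surjectivity of the Morita context
    (hφ_surj : ∀ x : R, x ∈ AddSubgroup.closure (Set.range fun p : N × M => φ p.1 p.2))
    (hψ_surj : ∀ y : S, y ∈ AddSubgroup.closure (Set.range fun p : M × N => ψ p.1 p.2)) :
    rsocle R ≠ ⊥ ↔ rsocle S ≠ ⊥ :=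
  morita_context_socle_ne_bot_iff_general hRsp hSsp rn ns hrn_addl hrn_mul hns_mul hN_bimod sm mr
    hsm_addl hsm_mul hmr_mul hM_bimod φ ψ hφ_addr hψ_addr hφ_left hφ_right hψ_left hψ_right hassoc₁
    hassoc₂ hφ_surj hψ_surj

end
end

section
/- Let R and S be semiprime idempotent rings admitting a surjective Morita context (R, S, N, M, φ, ψ). Then R coincides with its socle if and only if S coincides with its socle, i.e. R = soc(R) if and only if S = soc(S). -/
/-! If `soc R = R`, every element of `R` is a sum of elements `x` of minimal left ideals `I`,
and for such `x` and `n ∈ N` the left ideal `ψ(M, x n)` of `S` is zero or minimal. Indeed, let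
`J ⊊ ψ(M, x n)` be a left ideal and `k = ψ(m₀, x n) ∈ J`. The `y ∈ I` with `ψ(M, y n) ⊆ J`
form a left subideal of `I` which misses `x` and contains `φ(N, m₀) x`; by minimality it is
zero, so `N k = φ(N, m₀) x n = 0`, whence `S k = ψ(M, N k) = 0` and `k = 0` as `S` is
semiprime. Therefore `ψ(M, R N) ⊆ soc S`, and `ψ(m, n) ψ(m', n') = ψ(m, φ(n, m') n')` gives
`S = S² ⊆ soc S`. The converse is the same argument for the swapped context. -/

set_option synthInstance.maxHeartbeats 1000000
set_option maxHeartbeats 1000000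

noncomputable section

section RingLemmas

variable {R : Type} [NonUnitalRing R]

/-- The left annihilator of `R` is a two-sided ideal of square zero. -/
theorem IsSemiprimeRing.eq_zero_of_forall_mul_eq_zero (hR : IsSemiprimeRing R) {k : R}
    (hk : ∀ s : R, s * k = 0) : k = 0 := by
  set A : AddSubgroup R := ⨅ s : R, (AddMonoidHom.mulLeft s).ker
  have mem_A : ∀ x, x ∈ A ↔ ∀ s : R, s * x = 0 := fun x => by
    simp only [A, AddSubgroup.mem_iInf, AddMonoidHom.mem_ker, AddMonoidHom.coe_mulLeft]
  have hA : IsTwoSidedIdealSG A := fun a x hx => by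
    refine ⟨(mem_A _).2 fun s => ?_, (mem_A _).2 fun s => ?_⟩
    · rw [(mem_A x).1 hx a, mul_zero]
    · rw [← mul_assoc, (mem_A x).1 hx s, zero_mul]
  have hA0 : A = ⊥ := hR A hA fun x _ y hy => (mem_A y).1 hy x
  exact (AddSubgroup.eq_bot_iff_forall A).1 hA0 k ((mem_A k).2 hk)

theorem mul_mem_of_forall_mem_closure_left {G : Set R} (hG : ∀ x : R, x ∈ AddSubgroup.closure G)
    {A : AddSubgroup R} {b : R} (h : ∀ g ∈ G, g * b ∈ A) (a : R) : a * b ∈ A :=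
  (AddSubgroup.closure_le (A.comap (AddMonoidHom.mulRight b))).2 h (hG a)

theorem mul_mem_of_forall_mem_closure {G : Set R} (hG : ∀ x : R, x ∈ AddSubgroup.closure G)
    {A : AddSubgroup R} (h : ∀ g ∈ G, ∀ g' ∈ G, g * g' ∈ A) (a b : R) : a * b ∈ A :=
  (AddSubgroup.closure_le (A.comap (AddMonoidHom.mulLeft a))).2
    (fun g' hg' => mul_mem_of_forall_mem_closure_left hG (fun g hg => h g hg g' hg') a) (hG b)

theorem IsIdempotentRing.eq_top_of_forall_mul_mem (hR : IsIdempotentRing R) {A : AddSubgroup R}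
    (h : ∀ a b : R, a * b ∈ A) : A = ⊤ :=
  (AddSubgroup.eq_top_iff' A).2 fun x =>
    (AddSubgroup.closure_le A).2 (by rintro _ ⟨a, b, rfl⟩; exact h a b) (hR x)

theorem le_rsocle_of_isLeftIdeal {J : AddSubgroup R} (hJ : IsLeftIdeal J)
    (hmin : ∀ J' : AddSubgroup R, IsLeftIdeal J' → J' < J → J' = ⊥) : J ≤ rsocle R := by
  rcases eq_or_ne J ⊥ with hJ0 | hJ0
  · exact hJ0 ▸ bot_le
  · exact le_sSup ⟨hJ, hJ0, hmin⟩

end RingLemmas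

structure SurjectiveMoritaContext (R S N M : Type) [NonUnitalRing R] [NonUnitalRing S]
    [AddCommGroup N] [AddCommGroup M] where
  rn : R → N → N
  ns : N → S → N
  sm : S → M → M
  mr : M → R → M
  φ : N → M → R
  ψ : M → N → S
  rn_add : ∀ (r₁ r₂ : R) (n : N), rn (r₁ + r₂) n = rn r₁ n + rn r₂ n
  rn_mul : ∀ (r₁ r₂ : R) (n : N), rn (r₁ * r₂) n = rn r₁ (rn r₂ n)
  sm_add : ∀ (t₁ t₂ : S) (m : M), sm (t₁ + t₂) m = sm t₁ m + sm t₂ m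
  sm_mul : ∀ (t₁ t₂ : S) (m : M), sm (t₁ * t₂) m = sm t₁ (sm t₂ m)
  φ_add_left : ∀ (n₁ n₂ : N) (m : M), φ (n₁ + n₂) m = φ n₁ m + φ n₂ m
  φ_add_right : ∀ (n : N) (m₁ m₂ : M), φ n (m₁ + m₂) = φ n m₁ + φ n m₂
  ψ_add_left : ∀ (m₁ m₂ : M) (n : N), ψ (m₁ + m₂) n = ψ m₁ n + ψ m₂ n
  ψ_add_right : ∀ (m : M) (n₁ n₂ : N), ψ m (n₁ + n₂) = ψ m n₁ + ψ m n₂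
  φ_rn : ∀ (a : R) (n : N) (m : M), φ (rn a n) m = a * φ n m
  φ_mr : ∀ (n : N) (m : M) (a : R), φ n (mr m a) = φ n m * a
  φ_ns : ∀ (n : N) (t : S) (m : M), φ (ns n t) m = φ n (sm t m)
  ψ_sm : ∀ (t : S) (m : M) (n : N), ψ (sm t m) n = t * ψ m n
  ψ_ns : ∀ (m : M) (n : N) (t : S), ψ m (ns n t) = ψ m n * t
  ψ_mr : ∀ (m : M) (a : R) (n : N), ψ (mr m a) n = ψ m (rn a n)
  rn_φ : ∀ (n : N) (m : M) (n' : N), rn (φ n m) n' = ns n (ψ m n')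
  sm_ψ : ∀ (m : M) (n : N) (m' : M), sm (ψ m n) m' = mr m (φ n m')
  φ_surj : ∀ x : R, x ∈ AddSubgroup.closure (Set.range fun p : N × M => φ p.1 p.2)
  ψ_surj : ∀ y : S, y ∈ AddSubgroup.closure (Set.range fun p : M × N => ψ p.1 p.2)

namespace SurjectiveMoritaContext

variable {R S N M : Type} [NonUnitalRing R] [NonUnitalRing S] [AddCommGroup N] [AddCommGroup M]
  (P : SurjectiveMoritaContext R S N M)

def symm : SurjectiveMoritaContext S R M N where
  rn := P.sm
  ns := P.mr
  sm := P.rn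
  mr := P.ns
  φ := P.ψ
  ψ := P.φ
  rn_add := P.sm_add
  rn_mul := P.sm_mul
  sm_add := P.rn_add
  sm_mul := P.rn_mul
  φ_add_left := P.ψ_add_left
  φ_add_right := P.ψ_add_right
  ψ_add_left := P.φ_add_left
  ψ_add_right := P.φ_add_right
  φ_rn := P.ψ_sm
  φ_mr := P.ψ_ns
  φ_ns := P.ψ_mr
  ψ_sm := P.φ_rn
  ψ_ns := P.φ_mr
  ψ_mr := P.φ_ns
  rn_φ := P.sm_ψ
  sm_ψ := P.rn_φ
  φ_surj := P.ψ_surj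
  ψ_surj := P.φ_surj

def ψLeft (n : N) : M →+ S := AddMonoidHom.mk' (P.ψ · n) (P.ψ_add_left · · n)

def ψRn (m : M) (n : N) : R →+ S :=
  AddMonoidHom.mk' (fun a => P.ψ m (P.rn a n)) fun a b => by
    simp only [P.rn_add, P.ψ_add_right]

@[simp]
theorem ψRn_apply (m : M) (n : N) (a : R) : P.ψRn m n a = P.ψ m (P.rn a n) := rfl

theorem isLeftIdeal_range_ψLeft (n : N) : IsLeftIdeal (P.ψLeft n).range := by
  rintro t _ ⟨m, rfl⟩
  exact ⟨P.sm t m, P.ψ_sm t m n⟩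

theorem eq_bot_of_lt_range_ψLeft (hS : IsSemiprimeRing S) {I : AddSubgroup R}
    (hI : IsMinimalLeftIdeal I) {x : R} (hx : x ∈ I) (n : N) {J : AddSubgroup S}
    (hJ : IsLeftIdeal J) (hlt : J < (P.ψLeft (P.rn x n)).range) : J = ⊥ := by
  refine (J.bot_or_exists_ne_zero).resolve_right ?_
  rintro ⟨k, hkJ, hk0⟩
  obtain ⟨m₀, rfl⟩ := hlt.le hkJ
  set K : AddSubgroup R := I ⊓ ⨅ m : M, J.comap (P.ψRn m n)
  have mem_K : ∀ y, y ∈ K ↔ y ∈ I ∧ ∀ m, P.ψ m (P.rn y n) ∈ J := fun y => by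
    simp only [K, AddSubgroup.mem_inf, AddSubgroup.mem_iInf, AddSubgroup.mem_comap, ψRn_apply]
  have hK : IsLeftIdeal K := fun r y hy => by
    refine (mem_K _).2 ⟨hI.1 r y ((mem_K y).1 hy).1, fun m => ?_⟩
    rw [P.rn_mul, ← P.ψ_mr]
    exact ((mem_K y).1 hy).2 _
  have hxK : x ∉ K := fun hxK => hlt.not_ge <| by
    rintro _ ⟨m, rfl⟩
    exact ((mem_K x).1 hxK).2 m
  have hK0 : K = ⊥ :=
    hI.2.2 K hK (lt_of_le_of_ne inf_le_left fun h => hxK (h ▸ hx))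
  have hφx : ∀ n₀ : N, P.φ n₀ m₀ * x = 0 := fun n₀ => by
    refine (AddSubgroup.eq_bot_iff_forall K).1 hK0 _ ((mem_K _).2 ⟨hI.1 _ x hx, fun m => ?_⟩)
    rw [P.rn_mul, P.rn_φ, P.ψ_ns]
    exact hJ _ _ hkJ
  refine hk0 (hS.eq_zero_of_forall_mul_eq_zero
    (mul_mem_of_forall_mem_closure_left (A := ⊥) P.ψ_surj ?_))
  rintro _ ⟨⟨m', n'⟩, rfl⟩
  change P.ψ m' n' * P.ψ m₀ (P.rn x n) = 0
  rw [← P.ψ_ns, ← P.rn_φ, ← P.rn_mul, hφx, ← P.ψRn_apply, map_zero]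

theorem ψ_rn_mem_rsocle (hS : IsSemiprimeRing S) {x : R} (hx : x ∈ rsocle R) (m : M) (n : N) :
    P.ψ m (P.rn x n) ∈ rsocle S := by
  suffices rsocle R ≤ (rsocle S).comap (P.ψRn m n) from this hx
  refine sSup_le fun I hI y hy => ?_
  exact le_rsocle_of_isLeftIdeal (P.isLeftIdeal_range_ψLeft _)
    (fun J hJ hlt => P.eq_bot_of_lt_range_ψLeft hS hI hy n hJ hlt) ⟨m, rfl⟩

theorem rsocle_eq_top_of_rsocle_eq_top (P : SurjectiveMoritaContext R S N M)
    (hSid : IsIdempotentRing S) (hS : IsSemiprimeRing S)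
    (hR : rsocle R = ⊤) : rsocle S = ⊤ := by
  refine hSid.eq_top_of_forall_mul_mem (mul_mem_of_forall_mem_closure P.ψ_surj ?_)
  rintro _ ⟨⟨m, n⟩, rfl⟩ _ ⟨⟨m', n'⟩, rfl⟩
  change P.ψ m n * P.ψ m' n' ∈ rsocle S
  rw [← P.ψ_ns, ← P.rn_φ]
  exact P.ψ_rn_mem_rsocle hS (hR ▸ AddSubgroup.mem_top _) m n'

end SurjectiveMoritaContext

theorem morita_context_socle_eq_top_iff_general
    {R S N M : Type} [NonUnitalRing R] [NonUnitalRing S]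
    [AddCommGroup N] [AddCommGroup M]
    (hRid : IsIdempotentRing R) (hSid : IsIdempotentRing S)
    (hRsp : IsSemiprimeRing R) (hSsp : IsSemiprimeRing S)
    -- `N` is an `(R,S)`-bimodule
    (rn : R → N → N) (ns : N → S → N)
    (hrn_addl : ∀ (r₁ r₂ : R) (n : N), rn (r₁ + r₂) n = rn r₁ n + rn r₂ n)
    (hrn_mul : ∀ (r₁ r₂ : R) (n : N), rn (r₁ * r₂) n = rn r₁ (rn r₂ n))
    -- `M` is an `(S,R)`-bimodule
    (sm : S → M → M) (mr : M → R → M)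
    (hsm_addl : ∀ (t₁ t₂ : S) (m : M), sm (t₁ + t₂) m = sm t₁ m + sm t₂ m)
    (hsm_mul : ∀ (t₁ t₂ : S) (m : M), sm (t₁ * t₂) m = sm t₁ (sm t₂ m))
    -- the pairings of the Morita context
    (φ : N → M → R) (ψ : M → N → S)
    (hφ_addl : ∀ (n₁ n₂ : N) (m : M), φ (n₁ + n₂) m = φ n₁ m + φ n₂ m)
    (hφ_addr : ∀ (n : N) (m₁ m₂ : M), φ n (m₁ + m₂) = φ n m₁ + φ n m₂)
    (hψ_addl : ∀ (m₁ m₂ : M) (n : N), ψ (m₁ + m₂) n = ψ m₁ n + ψ m₂ n)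
    (hψ_addr : ∀ (m : M) (n₁ n₂ : N), ψ m (n₁ + n₂) = ψ m n₁ + ψ m n₂)
    -- `φ` is `R`-bilinear and `S`-balanced, `ψ` is `S`-bilinear and `R`-balanced
    (hφ_left : ∀ (a : R) (n : N) (m : M), φ (rn a n) m = a * φ n m)
    (hφ_right : ∀ (n : N) (m : M) (a : R), φ n (mr m a) = φ n m * a)
    (hφ_bal : ∀ (n : N) (t : S) (m : M), φ (ns n t) m = φ n (sm t m))
    (hψ_left : ∀ (t : S) (m : M) (n : N), ψ (sm t m) n = t * ψ m n)
    (hψ_right : ∀ (m : M) (n : N) (t : S), ψ m (ns n t) = ψ m n * t)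
    (hψ_bal : ∀ (m : M) (a : R) (n : N), ψ (mr m a) n = ψ m (rn a n))
    -- the associativity conditions `(n,m)n' = n[m,n']` and `[m,n]m' = m(n,m')`
    (hassoc₁ : ∀ (n : N) (m : M) (n' : N), rn (φ n m) n' = ns n (ψ m n'))
    (hassoc₂ : ∀ (m : M) (n : N) (m' : M), sm (ψ m n) m' = mr m (φ n m'))
    -- surjectivity of the Morita context
    (hφ_surj : ∀ x : R, x ∈ AddSubgroup.closure (Set.range fun p : N × M => φ p.1 p.2))
    (hψ_surj : ∀ y : S, y ∈ AddSubgroup.closure (Set.range fun p : M × N => ψ p.1 p.2)) :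
    rsocle R = ⊤ ↔ rsocle S = ⊤ := by
  let P : SurjectiveMoritaContext R S N M :=
    ⟨rn, ns, sm, mr, φ, ψ, hrn_addl, hrn_mul, hsm_addl, hsm_mul, hφ_addl, hφ_addr, hψ_addl,
      hψ_addr, hφ_left, hφ_right, hφ_bal, hψ_left, hψ_right, hψ_bal, hassoc₁, hassoc₂,
      hφ_surj, hψ_surj⟩
  exact ⟨P.rsocle_eq_top_of_rsocle_eq_top hSid hSsp,
    P.symm.rsocle_eq_top_of_rsocle_eq_top hRid hRsp⟩

/-- Let `R` and `S` be semiprime idempotent rings admitting a surjective Morita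
context `(R, S, N, M, φ, ψ)` (given by biadditive, balanced, associative pairings
`φ : N × M → R` and `ψ : M × N → S` whose images generate `R` and `S` as additive
groups).  Then `R` coincides with its socle if and only if `S` coincides with its socle. -/
theorem morita_context_socle_eq_top_iff
    {R S N M : Type} [NonUnitalRing R] [NonUnitalRing S]
    [AddCommGroup N] [AddCommGroup M]
    (hRid : IsIdempotentRing R) (hSid : IsIdempotentRing S)
    (hRsp : IsSemiprimeRing R) (hSsp : IsSemiprimeRing S)
    -- `N` is an `(R,S)`-bimodule
    (rn : R → N → N) (ns : N → S → N)
    (hrn_addl : ∀ (r₁ r₂ : R) (n : N), rn (r₁ + r₂) n = rn r₁ n + rn r₂ n)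
    (hrn_addr : ∀ (a : R) (n₁ n₂ : N), rn a (n₁ + n₂) = rn a n₁ + rn a n₂)
    (hrn_mul : ∀ (r₁ r₂ : R) (n : N), rn (r₁ * r₂) n = rn r₁ (rn r₂ n))
    (hns_addl : ∀ (n₁ n₂ : N) (t : S), ns (n₁ + n₂) t = ns n₁ t + ns n₂ t)
    (hns_addr : ∀ (n : N) (t₁ t₂ : S), ns n (t₁ + t₂) = ns n t₁ + ns n t₂)
    (hns_mul : ∀ (n : N) (t₁ t₂ : S), ns (ns n t₁) t₂ = ns n (t₁ * t₂))
    (hN_bimod : ∀ (a : R) (n : N) (t : S), ns (rn a n) t = rn a (ns n t))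
    -- `M` is an `(S,R)`-bimodule
    (sm : S → M → M) (mr : M → R → M)
    (hsm_addl : ∀ (t₁ t₂ : S) (m : M), sm (t₁ + t₂) m = sm t₁ m + sm t₂ m)
    (hsm_addr : ∀ (t : S) (m₁ m₂ : M), sm t (m₁ + m₂) = sm t m₁ + sm t m₂)
    (hsm_mul : ∀ (t₁ t₂ : S) (m : M), sm (t₁ * t₂) m = sm t₁ (sm t₂ m))
    (hmr_addl : ∀ (m₁ m₂ : M) (a : R), mr (m₁ + m₂) a = mr m₁ a + mr m₂ a)
    (hmr_addr : ∀ (m : M) (a₁ a₂ : R), mr m (a₁ + a₂) = mr m a₁ + mr m a₂)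
    (hmr_mul : ∀ (m : M) (a₁ a₂ : R), mr (mr m a₁) a₂ = mr m (a₁ * a₂))
    (hM_bimod : ∀ (t : S) (m : M) (a : R), mr (sm t m) a = sm t (mr m a))
    -- the pairings of the Morita context
    (φ : N → M → R) (ψ : M → N → S)
    (hφ_addl : ∀ (n₁ n₂ : N) (m : M), φ (n₁ + n₂) m = φ n₁ m + φ n₂ m)
    (hφ_addr : ∀ (n : N) (m₁ m₂ : M), φ n (m₁ + m₂) = φ n m₁ + φ n m₂)
    (hψ_addl : ∀ (m₁ m₂ : M) (n : N), ψ (m₁ + m₂) n = ψ m₁ n + ψ m₂ n)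
    (hψ_addr : ∀ (m : M) (n₁ n₂ : N), ψ m (n₁ + n₂) = ψ m n₁ + ψ m n₂)
    -- `φ` is `R`-bilinear and `S`-balanced, `ψ` is `S`-bilinear and `R`-balanced
    (hφ_left : ∀ (a : R) (n : N) (m : M), φ (rn a n) m = a * φ n m)
    (hφ_right : ∀ (n : N) (m : M) (a : R), φ n (mr m a) = φ n m * a)
    (hφ_bal : ∀ (n : N) (t : S) (m : M), φ (ns n t) m = φ n (sm t m))
    (hψ_left : ∀ (t : S) (m : M) (n : N), ψ (sm t m) n = t * ψ m n)
    (hψ_right : ∀ (m : M) (n : N) (t : S), ψ m (ns n t) = ψ m n * t)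
    (hψ_bal : ∀ (m : M) (a : R) (n : N), ψ (mr m a) n = ψ m (rn a n))
    -- the associativity conditions `(n,m)n' = n[m,n']` and `[m,n]m' = m(n,m')`
    (hassoc₁ : ∀ (n : N) (m : M) (n' : N), rn (φ n m) n' = ns n (ψ m n'))
    (hassoc₂ : ∀ (m : M) (n : N) (m' : M), sm (ψ m n) m' = mr m (φ n m'))
    -- surjectivity of the Morita context
    (hφ_surj : ∀ x : R, x ∈ AddSubgroup.closure (Set.range fun p : N × M => φ p.1 p.2))
    (hψ_surj : ∀ y : S, y ∈ AddSubgroup.closure (Set.range fun p : M × N => ψ p.1 p.2)) :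
    rsocle R = ⊤ ↔ rsocle S = ⊤ :=
  morita_context_socle_eq_top_iff_general hRid hSid hRsp hSsp rn ns hrn_addl hrn_mul sm mr hsm_addl
    hsm_mul φ ψ hφ_addl hφ_addr hψ_addl hψ_addr hφ_left hφ_right hφ_bal hψ_left hψ_right hψ_bal
    hassoc₁ hassoc₂ hφ_surj hψ_surj
end
end
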